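/- arXiv:1708.02839 — 8 statements merged into one kernel-verified Lean document; each statement's English description precedes it below -/
import Mathlib

section
/- Let s ∈ (0,1) and let x, y, p, q ∈ ℝ be points with |x-p| ≤ |y-q|, and suppose there is r > 0 and C ∈ (0,1) such that |p-q|^s = C^s·r, |x-p|^s ≥ r, and |y-p|^s ≥ r. Then |x-y|^s ≤ (s/(1-C))·|x-p|^s + |q-y|^s. -/
/-!
Put `a = |x - p|` and `b = |q - y|`, so `0 < a ≤ b`. The hypothesis on `|p - q|` gives
`|p - q| ≤ C a`, hence `|x - y| ≤ b + (1 + C) a`. Concavity of `t ↦ t ^ s` at `b` bounds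
`(b + (1 + C) a) ^ s` by `b ^ s + s (1 + C) a ^ s` (the tangent slope `s b ^ (s - 1)` is at most
`s a ^ (s - 1)` since `a ≤ b`), and `1 + C ≤ 1 / (1 - C)`.
-/

open Real

theorem Real.rpow_add_le_rpow_mul_one_add {b t s : ℝ} (hb : 0 < b) (ht : 0 ≤ t)
    (hs0 : 0 ≤ s) (hs1 : s ≤ 1) : (b + t) ^ s ≤ b ^ s * (1 + s * (t / b)) := by
  have hsplit : b + t = b * (1 + t / b) := by field_simp
  rw [hsplit, mul_rpow hb.le (by positivity)]
  gcongr
  exact rpow_one_add_le_one_add_mul_self (by linarith [div_nonneg ht hb.le]) hs0 hs1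

theorem Real.rpow_add_mul_le {a b c s : ℝ} (ha : 0 ≤ a) (hab : a ≤ b) (hb : 0 < b) (hc : 0 ≤ c)
    (hs0 : 0 ≤ s) (hs1 : s ≤ 1) : (b + c * a) ^ s ≤ b ^ s + s * c * a ^ s := by
  have hratio : a / b ≤ (a / b) ^ s :=
    self_le_rpow_of_le_one (div_nonneg ha hb.le) ((div_le_one hb).mpr hab) hs1
  calc (b + c * a) ^ s ≤ b ^ s * (1 + s * (c * a / b)) :=
        rpow_add_le_rpow_mul_one_add hb (by positivity) hs0 hs1
    _ = b ^ s + s * c * (a / b * b ^ s) := by ring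
    _ ≤ b ^ s + s * c * ((a / b) ^ s * b ^ s) := by gcongr
    _ = b ^ s + s * c * a ^ s := by
        rw [div_rpow ha hb.le, div_mul_cancel₀ _ (rpow_pos_of_pos hb s).ne']

theorem snowflake_improved_triangle_general (s : ℝ) (hs : 0 < s) (hs1 : s < 1)
    (x y p q r C : ℝ) (hr : 0 < r) (hC0 : 0 < C) (hC1 : C < 1)
    (hxpyq : |x - p| ≤ |y - q|)
    (hpq : |p - q| ^ s = C ^ s * r)
    (hxp : r ≤ |x - p| ^ s) :
    |x - y| ^ s ≤ s / (1 - C) * |x - p| ^ s + |q - y| ^ s := by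
  have ha : 0 < |x - p| := (abs_nonneg _).lt_of_ne fun h => by
    rw [← h, zero_rpow hs.ne'] at hxp
    linarith
  set a := |x - p|
  set b := |q - y|
  have hab : a ≤ b := hxpyq.trans_eq (abs_sub_comm y q)
  have hpq_le : |p - q| ≤ C * a := by
    rw [← rpow_le_rpow_iff (abs_nonneg _) (by positivity) hs, hpq, mul_rpow hC0.le ha.le]
    gcongr
  have hxy : |x - y| ≤ b + (1 + C) * a := by
    linarith [abs_sub_le x p y, abs_sub_le p q y]
  have hcoeff : s * (1 + C) ≤ s / (1 - C) := by
    rw [le_div_iff₀ (by linarith)]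
    nlinarith [mul_pos hs (mul_pos hC0 hC0)]
  calc |x - y| ^ s ≤ (b + (1 + C) * a) ^ s := rpow_le_rpow (abs_nonneg _) hxy hs.le
    _ ≤ b ^ s + s * (1 + C) * a ^ s :=
        rpow_add_mul_le ha.le hab (ha.trans_le hab) (by positivity) hs.le hs1.le
    _ ≤ s / (1 - C) * a ^ s + b ^ s := by
        nlinarith [rpow_nonneg ha.le s]

/-- Improved triangle inequality for the snowflaked distance `|x-y|^s` on `ℝ`:
if `|x-p| ≤ |y-q|`, `|p-q|^s = C^s·r`, `|x-p|^s ≥ r` and `|y-p|^s ≥ r`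
with `r > 0` and `C ∈ (0,1)`, then `|x-y|^s ≤ (s/(1-C))·|x-p|^s + |q-y|^s`. -/
theorem snowflake_improved_triangle (s : ℝ) (hs : 0 < s) (hs1 : s < 1)
    (x y p q r C : ℝ) (hr : 0 < r) (hC0 : 0 < C) (hC1 : C < 1)
    (hxpyq : |x - p| ≤ |y - q|)
    (hpq : |p - q| ^ s = C ^ s * r)
    (hxp : r ≤ |x - p| ^ s)
    (hyp : r ≤ |y - p| ^ s) :
    |x - y| ^ s ≤ s / (1 - C) * |x - p| ^ s + |q - y| ^ s :=
  snowflake_improved_triangle_general s hs hs1 x y p q r C hr hC0 hC1 hxpyq hpq hxp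
end

section
/- For every s ∈ (0,1) and every λ with 0 < λ < (1-s)^s, the metric space (ℝ, |x-y|^s) has λ-invisible pieces: for every r > 0 and every ball B of radius r (in the snowflaked metric), there exist points p, q ∈ B with |p-q|^s ≥ λr such that for all x, y outside B, |x-y|^s ≤ |x-p|^s + |q-y|^s. -/
/-! The ball of snowflake radius `r` is the interval of radius `R = r^(1/s)` around `c`; take
`p = c - (1-s)R` and `q = c`. Unless `x` lies left and `y` right of the ball, already
`|x-y| ≤ |x-p| + |q-y|`, and subadditivity of `t ↦ t^s` concludes. In the separated case write
`y - x = 2R + d + k` with `x - p = sR + d` and `y - q = R + k`; concavity of `t ↦ t^s` makes the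
defect `(sR+d)^s + (R+k)^s - (2R+d+k)^s` increasing in `d` and `k`, so it suffices to treat
`d = k = 0`, which is `2^s ≤ 1 + s^s`. -/

open Real

theorem ConcaveOn.map_add_add_add_map_le {f : ℝ → ℝ} {S : Set ℝ} (hf : ConcaveOn ℝ S f)
    {b d g : ℝ} (hb : b ∈ S) (hbdg : b + d + g ∈ S) (hd : 0 ≤ d) (hg : 0 ≤ g) :
    f (b + d + g) + f b ≤ f (b + d) + f (b + g) := by
  rcases (add_nonneg hd hg).eq_or_lt with h | h
  · obtain ⟨rfl, rfl⟩ : d = 0 ∧ g = 0 := ⟨by linarith, by linarith⟩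
    simp
  -- `b + d` and `b + g` are the two convex combinations of `b` and `b + d + g` with weights
  -- `g / (d + g)` and `d / (d + g)`, in either order.
  have hsum : g / (d + g) + d / (d + g) = 1 := by field_simp; ring
  have h1 := hf.2 hb hbdg (div_nonneg hg h.le) (div_nonneg hd h.le) hsum
  have h2 := hf.2 hb hbdg (div_nonneg hd h.le) (div_nonneg hg h.le) (by linarith)
  have e1 : g / (d + g) * b + d / (d + g) * (b + d + g) = b + d := by field_simp; ring
  have e2 : d / (d + g) * b + g / (d + g) * (b + d + g) = b + g := by field_simp; ring
  simp only [smul_eq_mul, e1, e2] at h1 h2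
  linear_combination h1 + h2 - (f b + f (b + d + g)) * hsum

theorem two_rpow_le_one_add_rpow_self {s : ℝ} (hs : 0 < s) (hs1 : s ≤ 1) :
    (2 : ℝ) ^ s ≤ 1 + s ^ s := by
  have bernoulli : (1 + 1 : ℝ) ^ s ≤ 1 + s * 1 :=
    rpow_one_add_le_one_add_mul_self (by norm_num) hs.le hs1
  have : s ^ (1 : ℝ) ≤ s ^ s := rpow_le_rpow_of_exponent_ge hs hs1 hs1
  rw [rpow_one] at this
  norm_num at bernoulli
  linarith

theorem rpow_two_mul_add_add_le {s R d k : ℝ} (hs : 0 < s) (hs1 : s ≤ 1) (hR : 0 ≤ R)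
    (hd : 0 ≤ d) (hk : 0 ≤ k) :
    (2 * R + d + k) ^ s ≤ (s * R + d) ^ s + (R + k) ^ s := by
  have hconc := concaveOn_rpow hs.le hs1
  have grow_k : (2 * R + d + k) ^ s + R ^ s ≤ (2 * R + d) ^ s + (R + k) ^ s := by
    have := hconc.map_add_add_add_map_le (b := R) (d := R + d) (g := k) (Set.mem_Ici.2 hR)
      (Set.mem_Ici.2 (by positivity)) (by positivity) hk
    convert this using 3 <;> ring
  have grow_d : (2 * R + d) ^ s + (s * R) ^ s ≤ (2 * R) ^ s + (s * R + d) ^ s := by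
    have := hconc.map_add_add_add_map_le (b := s * R) (d := (2 - s) * R) (g := d)
      (Set.mem_Ici.2 (by positivity)) (Set.mem_Ici.2 (by nlinarith)) (by nlinarith) hd
    convert this using 3 <;> ring
  have base : (2 * R) ^ s ≤ R ^ s + (s * R) ^ s := by
    rw [mul_rpow zero_le_two hR, mul_rpow hs.le hR]
    nlinarith [two_rpow_le_one_add_rpow_self hs hs1, rpow_nonneg hR s]
  linarith

theorem abs_sub_le_abs_sub_add_abs_sub {p q x y : ℝ} (hpq : p ≤ q)
    (h : y ≤ x ∨ q ≤ x ∨ y ≤ p) : |x - y| ≤ |x - p| + |q - y| := by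
  have := le_abs_self (x - p)
  have := neg_abs_le (x - p)
  have := le_abs_self (q - y)
  have := neg_abs_le (q - y)
  rw [abs_le]
  constructor <;> rcases h with h | h | h <;> linarith

theorem rpow_abs_sub_le_of_abs_sub_le {s x y p q : ℝ} (hs : 0 ≤ s) (hs1 : s ≤ 1)
    (h : |x - y| ≤ |x - p| + |q - y|) : |x - y| ^ s ≤ |x - p| ^ s + |q - y| ^ s :=
  (rpow_le_rpow (abs_nonneg _) h hs).trans
    (rpow_add_le_add_rpow (abs_nonneg _) (abs_nonneg _) hs hs1)

theorem snowflake_has_invisible_pieces_general (s lam : ℝ) (hs : 0 < s) (hs1 : s < 1)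
    (hlam : lam < (1 - s) ^ s) :
    ∀ r : ℝ, 0 < r → ∀ c : ℝ, ∃ p q : ℝ,
      |p - c| ^ s < r ∧ |q - c| ^ s < r ∧ lam * r ≤ |p - q| ^ s ∧
      ∀ x y : ℝ, ¬ (|x - c| ^ s < r) → ¬ (|y - c| ^ s < r) →
        |x - y| ^ s ≤ |x - p| ^ s + |q - y| ^ s := by
  intro r hr c
  obtain ⟨R, hR, rfl⟩ : ∃ R, 0 < R ∧ R ^ s = r :=
    ⟨r ^ s⁻¹, by positivity, rpow_inv_rpow hr.le hs.ne'⟩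
  have mem_ball (z : ℝ) : |z - c| ^ s < R ^ s ↔ |z - c| < R :=
    rpow_lt_rpow_iff (abs_nonneg _) hR.le hs
  have hp : |c - (1 - s) * R - c| = (1 - s) * R := by
    rw [sub_sub_cancel_left, abs_neg, abs_of_pos (by nlinarith)]
  refine ⟨c - (1 - s) * R, c, ?_, ?_, ?_, ?_⟩
  · rw [mem_ball, hp]
    nlinarith
  · rwa [mem_ball, sub_self, abs_zero]
  · rw [hp, mul_rpow (by linarith) hR.le]
    exact mul_le_mul_of_nonneg_right hlam.le (rpow_nonneg hR.le s)
  intro x y hx hy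
  rw [mem_ball, not_lt, le_abs'] at hx hy
  have hpq : c - (1 - s) * R ≤ c := by nlinarith
  rcases hx with hxl | hxr <;> rcases hy with hyl | hyr
  · exact rpow_abs_sub_le_of_abs_sub_le hs.le hs1.le
      (abs_sub_le_abs_sub_add_abs_sub hpq (Or.inr (Or.inr (by nlinarith))))
  · have := rpow_two_mul_add_add_le (d := c - R - x) (k := y - c - R) hs hs1.le hR.le
      (by linarith) (by linarith)
    rw [abs_of_neg (by linarith : x - y < 0),
      abs_of_neg (by nlinarith : x - (c - (1 - s) * R) < 0), abs_of_neg (by linarith : c - y < 0)]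
    convert this using 3 <;> ring
  · exact rpow_abs_sub_le_of_abs_sub_le hs.le hs1.le
      (abs_sub_le_abs_sub_add_abs_sub hpq (Or.inl (by linarith)))
  · exact rpow_abs_sub_le_of_abs_sub_le hs.le hs1.le
      (abs_sub_le_abs_sub_add_abs_sub hpq (Or.inr (Or.inl (by linarith))))

/-- For every `s ∈ (0,1)` and `0 < λ < (1-s)^s`, the snowflaked line `(ℝ, |x-y|^s)`
has `λ`-invisible pieces: for every `r > 0` and every ball (for the snowflaked metric)
of radius `r` and center `c`, there exist `p, q` in the ball with `|p-q|^s ≥ λ·r` such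
that for all `x, y` outside the ball, `|x-y|^s ≤ |x-p|^s + |q-y|^s`. -/
theorem snowflake_has_invisible_pieces (s lam : ℝ) (hs : 0 < s) (hs1 : s < 1)
    (hlam0 : 0 < lam) (hlam : lam < (1 - s) ^ s) :
    ∀ r : ℝ, 0 < r → ∀ c : ℝ, ∃ p q : ℝ,
      |p - c| ^ s < r ∧ |q - c| ^ s < r ∧ lam * r ≤ |p - q| ^ s ∧
      ∀ x y : ℝ, ¬ (|x - c| ^ s < r) → ¬ (|y - c| ^ s < r) →
        |x - y| ^ s ≤ |x - p| ^ s + |q - y| ^ s :=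
  snowflake_has_invisible_pieces_general s lam hs hs1 hlam
end

section
/- Let (X,d) be an Ahlfors α-regular metric space. If a sequence of compact subsets K_n converges to a compact set K in the Hausdorff distance, then limsup_{n→∞} H^α(K_n) ≤ H^α(K), where H^α is the α-dimensional Hausdorff measure on X. -/
open MeasureTheory Filter Metric
open scoped ENNReal Topology

/-! The upper Ahlfors bound makes `μH[α]` locally finite, so the compact set `K'`
has a closed thickening of finite measure, and continuity from above gives
`μH[α] (cthickening ε K') → μH[α] K'` as `ε → 0`. Since `Kₙ ⊆ cthickening ε K'` for large `n`,
the limsup is at most each of these measures. -/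

theorem IsCompact.exists_cthickening_measure_ne_top {X : Type*} [PseudoMetricSpace X]
    [MeasurableSpace X] (μ : Measure X) [IsLocallyFiniteMeasure μ] {s : Set X}
    (hs : IsCompact s) : ∃ R > (0 : ℝ), μ (cthickening R s) ≠ ∞ := by
  obtain ⟨U, hsU, hU, hμU⟩ := hs.exists_open_superset_measure_lt_top μ
  obtain ⟨R, hR, hRU⟩ := hs.exists_cthickening_subset_open hU hsU
  exact ⟨R, hR, ((measure_mono hRU).trans_lt hμU).ne⟩

theorem eventually_subset_cthickening_of_tendsto_hausdorffEDist {X ι : Type*}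
    [PseudoEMetricSpace X] {l : Filter ι} {K : ι → Set X} {K' : Set X}
    (h : Tendsto (fun i => hausdorffEDist (K i) K') l (𝓝 0)) {ε : ℝ} (hε : 0 < ε) :
    ∀ᶠ i in l, K i ⊆ cthickening ε K' := by
  filter_upwards [h.eventually_lt_const (ENNReal.ofReal_pos.2 hε)] with i hi x hx
  exact mem_cthickening_iff.2 ((infEDist_le_hausdorffEDist_of_mem hx).trans hi.le)

theorem limsup_measure_le_of_tendsto_hausdorffEDist {X ι : Type*} [MetricSpace X]
    [MeasurableSpace X] [OpensMeasurableSpace X] (μ : Measure X) [IsLocallyFiniteMeasure μ]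
    {l : Filter ι} {K : ι → Set X} {K' : Set X} (hK' : IsCompact K')
    (h : Tendsto (fun i => hausdorffEDist (K i) K') l (𝓝 0)) :
    limsup (fun i => μ (K i)) l ≤ μ K' := by
  have hlim : Tendsto (fun r => μ (cthickening r K')) (𝓝[>] 0) (𝓝 (μ K')) :=
    (tendsto_measure_cthickening_of_isClosed (hK'.exists_cthickening_measure_ne_top μ)
      hK'.isClosed).mono_left nhdsWithin_le_nhds
  refine ge_of_tendsto hlim ?_
  filter_upwards [self_mem_nhdsWithin] with ε hε
  refine limsup_le_of_le (by isBoundedDefault) ?_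
  filter_upwards [eventually_subset_cthickening_of_tendsto_hausdorffEDist h hε] with i hi
  exact measure_mono hi

theorem isLocallyFiniteMeasure_hausdorffMeasure_of_measure_ball_le {X : Type*} [EMetricSpace X]
    [MeasurableSpace X] [BorelSpace X] {α : ℝ} (hα : 0 ≤ α) {C : ℝ≥0∞} (hC : C ≠ ⊤)
    (hball : ∀ (x : X) (r : ℝ≥0∞), 0 < r → r ≠ ⊤ → r ≤ ediam (Set.univ : Set X) →
      μH[α] (eball x r) ≤ C * r ^ α) :
    IsLocallyFiniteMeasure (μH[α] : Measure X) := by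
  refine ⟨fun x => ?_⟩
  rcases eq_or_ne (ediam (Set.univ : Set X)) 0 with hdiam | hdiam
  · exact ⟨Set.univ, univ_mem, (Measure.hausdorffMeasure_le_one_of_subsingleton
      (ediam_eq_zero_iff.1 hdiam) hα).trans_lt ENNReal.one_lt_top⟩
  · set r := min 1 (ediam (Set.univ : Set X))
    have hr : 0 < r := lt_min one_pos (pos_iff_ne_zero.2 hdiam)
    have hr_top : r ≠ ⊤ := ne_top_of_le_ne_top ENNReal.one_ne_top (min_le_left _ _)
    refine ⟨eball x r, eball_mem_nhds x hr, ?_⟩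
    calc μH[α] (eball x r) ≤ C * r ^ α := hball x r hr hr_top (min_le_right _ _)
      _ < ⊤ := ENNReal.mul_lt_top hC.lt_top (ENNReal.rpow_lt_top_of_nonneg hα hr_top)

theorem limsup_hausdorffMeasure_le_of_hausdorffDist_tendsto_general
    {X : Type*} [MetricSpace X] [MeasurableSpace X] [BorelSpace X]
    (α : ℝ) (hα : 0 < α) (C : ℝ≥0∞) (hCtop : C ≠ ⊤)
    (hreg : ∀ (x : X) (r : ℝ≥0∞), 0 < r → r ≠ ⊤ → r ≤ EMetric.diam (Set.univ : Set X) →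
      C⁻¹ * r ^ α ≤ μH[α] (EMetric.ball x r) ∧ μH[α] (EMetric.ball x r) ≤ C * r ^ α)
    (K : ℕ → Set X) (K' : Set X) (hK' : IsCompact K')
    (hconv : Tendsto (fun n => EMetric.hausdorffEdist (K n) K') atTop (nhds 0)) :
    limsup (fun n => μH[α] (K n)) atTop ≤ μH[α] K' := by
  have := isLocallyFiniteMeasure_hausdorffMeasure_of_measure_ball_le hα.le hCtop
    fun x r hr hr_top hr_diam => (hreg x r hr hr_top hr_diam).2
  exact limsup_measure_le_of_tendsto_hausdorffEDist μH[α] hK' hconv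

/-- In an Ahlfors `α`-regular metric space, if a sequence of compact sets `Kₙ`
converges to a compact set `K` in the Hausdorff distance, then
`limsup H^α(Kₙ) ≤ H^α(K)`. -/
theorem limsup_hausdorffMeasure_le_of_hausdorffDist_tendsto
    {X : Type*} [MetricSpace X] [MeasurableSpace X] [BorelSpace X] [CompleteSpace X]
    (α : ℝ) (hα : 0 < α) (C : ℝ≥0∞) (hC0 : 0 < C) (hCtop : C ≠ ⊤)
    (hreg : ∀ (x : X) (r : ℝ≥0∞), 0 < r → r ≠ ⊤ → r ≤ EMetric.diam (Set.univ : Set X) →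
      C⁻¹ * r ^ α ≤ μH[α] (EMetric.ball x r) ∧ μH[α] (EMetric.ball x r) ≤ C * r ^ α)
    (K : ℕ → Set X) (K' : Set X) (hK : ∀ n, IsCompact (K n)) (hK' : IsCompact K')
    (hconv : Tendsto (fun n => EMetric.hausdorffEdist (K n) K') atTop (nhds 0)) :
    limsup (fun n => μH[α] (K n)) atTop ≤ μH[α] K' :=
  limsup_hausdorffMeasure_le_of_hausdorffDist_tendsto_general α hα C hCtop hreg K K' hK' hconv
end

section
/- Let (X,d) be an unbounded BPI space of dimension α and let 0 < s < 1. Then the snowflaked space (X, d^s) is an unbounded BPI space of dimension α/s. -/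
open scoped ENNReal

/-- The distance function of an explicit metric structure. -/
def distOf {X : Type*} (m : MetricSpace X) : X → X → ℝ :=
  letI := m; fun x y => dist x y

/-- The `α`-dimensional Hausdorff measure (as a set function) of an explicit metric
structure, with respect to its Borel σ-algebra. -/
noncomputable def hMeas {X : Type*} (m : MetricSpace X) (α : ℝ) : Set X → ℝ≥0∞ :=
  letI := m
  letI : MeasurableSpace X := borel X
  haveI : BorelSpace X := ⟨rfl⟩
  fun A => MeasureTheory.Measure.hausdorffMeasure α A

/-- Ahlfors regularity of dimension `α` for a metric structure `m` on `X`. -/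
def AhlforsWith {X : Type*} (m : MetricSpace X) (α : ℝ) : Prop :=
  letI := m
  CompleteSpace X ∧ ∃ K : ℝ≥0∞, 0 < K ∧ K ≠ ⊤ ∧
    ∀ (x : X) (r : ℝ≥0∞), 0 < r → r ≠ ⊤ → r ≤ EMetric.diam (Set.univ : Set X) →
      K⁻¹ * r ^ α ≤ hMeas m α (EMetric.ball x r) ∧ hMeas m α (EMetric.ball x r) ≤ K * r ^ α

/-- `(X, m)` is a BPI space of dimension `α`: it is Ahlfors `α`-regular and there are
`C, θ > 0` such that any two balls `B(x,r)`, `B(y,t)` (radii at most the diameter)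
contain a closed set `A ⊆ B(x,r)` with `H^α(A) ≥ θ·r^α` and a `C`-biLipschitz map
from `(A, r⁻¹d)` to `(B(y,t), t⁻¹d)`. -/
def IsBPIWith {X : Type*} (m : MetricSpace X) (α : ℝ) : Prop :=
  letI := m
  AhlforsWith m α ∧ ∃ C θ : ℝ, 0 < C ∧ 0 < θ ∧
    ∀ (x y : X) (r t : ℝ), 0 < r → 0 < t →
      ENNReal.ofReal r ≤ EMetric.diam (Set.univ : Set X) →
      ENNReal.ofReal t ≤ EMetric.diam (Set.univ : Set X) →
      ∃ A : Set X, IsClosed A ∧ A ⊆ Metric.ball x r ∧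
        ENNReal.ofReal (θ * r ^ α) ≤ hMeas m α A ∧
        ∃ f : X → X, (∀ a ∈ A, f a ∈ Metric.ball y t) ∧
          ∀ a ∈ A, ∀ b ∈ A,
            C⁻¹ * (t / r) * dist a b ≤ dist (f a) (f b) ∧
            dist (f a) (f b) ≤ C * (t / r) * dist a b

/-!
For `s > 0`, a bijection `f` with `d(f x, f y) = d(x, y) ^ s` is a uniform equivalence that maps
the ball `B(x, r)` onto `B(f x, r ^ s)`, identifies `H^α` with `H^(α / s)` (Hölder on both sides),
and turns a map that is `C`-biLipschitz at scale `t₀ / r₀` into one that is `C ^ s`-biLipschitz at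
scale `(t₀ / r₀) ^ s`. So the BPI data of the original space for the radii `r ^ (1/s)`, `t ^ (1/s)`
are BPI data of the image for the radii `r`, `t`, with constants `C ^ s` and `θ`.
-/

open MeasureTheory Metric Set

section Snowflake

variable {E F : Type*} [MetricSpace E] [MetricSpace F] {s : ℝ}

theorem edist_eq_rpow_of_dist_eq_rpow {f : E → F} (hs : 0 ≤ s)
    (hf : ∀ x y, dist (f x) (f y) = dist x y ^ s) (x y : E) :
    edist (f x) (f y) = edist x y ^ s := by
  rw [edist_dist, edist_dist, hf, ENNReal.ofReal_rpow_of_nonneg dist_nonneg hs]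

theorem holderWith_of_dist_eq_rpow {f : E → F} (hs : 0 ≤ s)
    (hf : ∀ x y, dist (f x) (f y) = dist x y ^ s) : HolderWith 1 s.toNNReal f := fun x y => by
  rw [edist_eq_rpow_of_dist_eq_rpow hs hf, ENNReal.coe_one, one_mul, Real.coe_toNNReal s hs]

theorem Equiv.dist_symm_eq_rpow_inv (f : E ≃ F) (hs : s ≠ 0)
    (hf : ∀ x y, dist (f x) (f y) = dist x y ^ s) (u v : F) :
    dist (f.symm u) (f.symm v) = dist u v ^ s⁻¹ := by
  have h := hf (f.symm u) (f.symm v)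
  rw [f.apply_symm_apply, f.apply_symm_apply] at h
  rw [h, Real.rpow_rpow_inv dist_nonneg hs]

def Equiv.toUniformEquivOfDistEqRpow (f : E ≃ F) (hs : 0 < s)
    (hf : ∀ x y, dist (f x) (f y) = dist x y ^ s) : E ≃ᵤ F where
  toEquiv := f
  uniformContinuous_toFun :=
    (holderWith_of_dist_eq_rpow hs.le hf).uniformContinuous (Real.toNNReal_pos.2 hs)
  uniformContinuous_invFun :=
    (holderWith_of_dist_eq_rpow (inv_nonneg.2 hs.le)
      (f.dist_symm_eq_rpow_inv hs.ne' hf)).uniformContinuous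
      (Real.toNNReal_pos.2 (inv_pos.2 hs))

theorem Equiv.hausdorffMeasure_image_of_dist_eq_rpow [MeasurableSpace E] [BorelSpace E]
    [MeasurableSpace F] [BorelSpace F] (f : E ≃ F) (hs : 0 < s)
    (hf : ∀ x y, dist (f x) (f y) = dist x y ^ s) {α : ℝ} (hα : 0 ≤ α) (A : Set E) :
    μH[α / s] (f '' A) = μH[α] A := by
  apply le_antisymm
  · have h := ((holderWith_of_dist_eq_rpow hs.le hf).holderOnWith A).hausdorffMeasure_image_le
      (Real.toNNReal_pos.2 hs) (div_nonneg hα hs.le)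
    rwa [ENNReal.coe_one, ENNReal.one_rpow, one_mul, Real.coe_toNNReal s hs.le,
      mul_div_cancel₀ α hs.ne'] at h
  · have h := ((holderWith_of_dist_eq_rpow (inv_nonneg.2 hs.le)
      (f.dist_symm_eq_rpow_inv hs.ne' hf)).holderOnWith (f '' A)).hausdorffMeasure_image_le
      (Real.toNNReal_pos.2 (inv_pos.2 hs)) hα
    rwa [f.symm_image_image, ENNReal.coe_one, ENNReal.one_rpow, one_mul,
      Real.coe_toNNReal _ (inv_nonneg.2 hs.le),
      inv_mul_eq_div] at h

theorem Equiv.hMeas_image_of_dist_eq_rpow (f : E ≃ F) (hs : 0 < s)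
    (hf : ∀ x y, dist (f x) (f y) = dist x y ^ s) {α : ℝ} (hα : 0 ≤ α) (A : Set E) :
    hMeas ‹MetricSpace F› (α / s) (f '' A) = hMeas ‹MetricSpace E› α A := by
  borelize E F
  exact f.hausdorffMeasure_image_of_dist_eq_rpow hs hf hα A

theorem mapsTo_ball_of_dist_eq_rpow {f : E → F} (hs : 0 < s)
    (hf : ∀ x y, dist (f x) (f y) = dist x y ^ s) (x : E) (r : ℝ) :
    MapsTo f (ball x r) (ball (f x) (r ^ s)) := fun y hy => by
  rw [mem_ball, hf]
  exact Real.rpow_lt_rpow dist_nonneg hy hs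

theorem Equiv.image_eball_of_dist_eq_rpow (f : E ≃ F) (hs : 0 < s)
    (hf : ∀ x y, dist (f x) (f y) = dist x y ^ s) (x : E) (r : ℝ≥0∞) :
    f '' eball x r = eball (f x) (r ^ s) := by
  rw [← f.image_preimage (eball (f x) (r ^ s))]
  congr 1
  ext y
  rw [mem_preimage, mem_eball, mem_eball, edist_eq_rpow_of_dist_eq_rpow hs.le hf,
    ENNReal.rpow_lt_rpow_iff hs]

theorem Equiv.rpow_inv_le_ediam_univ (f : E ≃ F) (hs : 0 < s)
    (hf : ∀ x y, dist (f x) (f y) = dist x y ^ s) {r : ℝ≥0∞}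
    (hr : r ≤ ediam (univ : Set F)) : r ^ s⁻¹ ≤ ediam (univ : Set E) := by
  have hdiam := (holderWith_of_dist_eq_rpow hs.le hf).ediam_image_le univ
  rw [image_univ, f.surjective.range_eq, ENNReal.coe_one, one_mul,
    Real.coe_toNNReal s hs.le] at hdiam
  calc r ^ s⁻¹ ≤ (ediam (univ : Set E) ^ s) ^ s⁻¹ :=
        ENNReal.rpow_le_rpow (hr.trans hdiam) (inv_nonneg.2 hs.le)
    _ = ediam (univ : Set E) := ENNReal.rpow_rpow_inv hs.ne' _

theorem exists_lt_dist_of_dist_eq_rpow {f : E → F} (hs : 0 < s)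
    (hf : ∀ x y, dist (f x) (f y) = dist x y ^ s) (hE : ∀ R : ℝ, ∃ x y : E, R < dist x y)
    (R : ℝ) : ∃ x y : F, R < dist x y := by
  obtain ⟨x, y, hxy⟩ := hE (max R 0 ^ s⁻¹)
  refine ⟨f x, f y, ?_⟩
  calc R ≤ max R 0 := le_max_left R 0
    _ = (max R 0 ^ s⁻¹) ^ s := (Real.rpow_inv_rpow (le_max_right R 0) hs.ne').symm
    _ < dist x y ^ s := Real.rpow_lt_rpow (by positivity) hxy hs
    _ = dist (f x) (f y) := (hf x y).symm

theorem biLipschitz_bounds_rpow {C k d d' : ℝ} (hC : 0 < C) (hk : 0 ≤ k) (hd : 0 ≤ d)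
    (hs : 0 ≤ s) (h : C⁻¹ * k * d ≤ d' ∧ d' ≤ C * k * d) :
    (C ^ s)⁻¹ * k ^ s * d ^ s ≤ d' ^ s ∧ d' ^ s ≤ C ^ s * k ^ s * d ^ s := by
  have hpow : ∀ c, 0 ≤ c → (c * k * d) ^ s = c ^ s * k ^ s * d ^ s := fun c hc => by
    rw [Real.mul_rpow (by positivity) hd, Real.mul_rpow hc hk]
  constructor
  · rw [← Real.inv_rpow hC.le, ← hpow _ (inv_nonneg.2 hC.le)]
    exact Real.rpow_le_rpow (by positivity) h.1 hs
  · rw [← hpow _ hC.le]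
    exact Real.rpow_le_rpow (le_trans (by positivity) h.1) h.2 hs

theorem AhlforsWith.of_dist_eq_rpow (f : E ≃ F) (hs : 0 < s)
    (hf : ∀ x y, dist (f x) (f y) = dist x y ^ s) {α : ℝ} (hα : 0 ≤ α)
    (hE : AhlforsWith ‹MetricSpace E› α) : AhlforsWith ‹MetricSpace F› (α / s) := by
  obtain ⟨hcomplete, K, hK0, hKtop, hK⟩ := hE
  refine ⟨(f.toUniformEquivOfDistEqRpow hs hf).completeSpace_iff.1 hcomplete, K, hK0, hKtop,
    fun x r hr0 hrtop hr => ?_⟩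
  have hball : eball x r = f '' eball (f.symm x) (r ^ s⁻¹) := by
    rw [f.image_eball_of_dist_eq_rpow hs hf, f.apply_symm_apply, ENNReal.rpow_inv_rpow hs.ne']
  have hradius : (r ^ s⁻¹) ^ α = r ^ (α / s) := by rw [← ENNReal.rpow_mul, inv_mul_eq_div]
  show K⁻¹ * r ^ (α / s) ≤ hMeas _ (α / s) (eball x r) ∧
    hMeas _ (α / s) (eball x r) ≤ K * r ^ (α / s)
  rw [hball, f.hMeas_image_of_dist_eq_rpow hs hf hα, ← hradius]
  exact hK _ _ (ENNReal.rpow_pos hr0 hrtop)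
    (ENNReal.rpow_ne_top_of_nonneg (inv_nonneg.2 hs.le) hrtop) (f.rpow_inv_le_ediam_univ hs hf hr)

theorem IsBPIWith.of_dist_eq_rpow (f : E ≃ F) (hs : 0 < s)
    (hf : ∀ x y, dist (f x) (f y) = dist x y ^ s) {α : ℝ} (hα : 0 ≤ α)
    (hE : IsBPIWith ‹MetricSpace E› α) : IsBPIWith ‹MetricSpace F› (α / s) := by
  obtain ⟨hAhlfors, C, θ, hC, hθ, hBPI⟩ := hE
  refine ⟨hAhlfors.of_dist_eq_rpow f hs hf hα, C ^ s, θ, Real.rpow_pos_of_pos hC s, hθ,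
    fun x y r t hr ht hrD htD => ?_⟩
  have hroot : ∀ u : ℝ, 0 < u → ENNReal.ofReal u ≤ ediam (univ : Set F) →
      0 < u ^ s⁻¹ ∧ ENNReal.ofReal (u ^ s⁻¹) ≤ ediam (univ : Set E) := fun u hu huD =>
    ⟨Real.rpow_pos_of_pos hu _, ENNReal.ofReal_rpow_of_nonneg hu.le (inv_nonneg.2 hs.le) ▸
      f.rpow_inv_le_ediam_univ hs hf huD⟩
  have hr₀ : (r ^ s⁻¹) ^ s = r := Real.rpow_inv_rpow hr.le hs.ne'
  have ht₀ : (t ^ s⁻¹) ^ s = t := Real.rpow_inv_rpow ht.le hs.ne'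
  obtain ⟨A, hAclosed, hAball, hAθ, g, hgball, hg⟩ := hBPI (f.symm x) (f.symm y) _ _
    (hroot r hr hrD).1 (hroot t ht htD).1 (hroot r hr hrD).2 (hroot t ht htD).2
  refine ⟨f '' A, (f.toUniformEquivOfDistEqRpow hs hf).toHomeomorph.isClosed_image.2 hAclosed,
    ?_, ?_, f ∘ g ∘ f.symm, ?_, ?_⟩
  · rintro _ ⟨a, ha, rfl⟩
    simpa [hr₀] using mapsTo_ball_of_dist_eq_rpow hs hf (f.symm x) _ (hAball ha)
  · rwa [f.hMeas_image_of_dist_eq_rpow hs hf hα, div_eq_inv_mul, Real.rpow_mul hr.le]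
  · rintro _ ⟨a, ha, rfl⟩
    simpa [ht₀] using mapsTo_ball_of_dist_eq_rpow hs hf (f.symm y) _ (hgball a ha)
  · rintro _ ⟨a, ha, rfl⟩ _ ⟨b, hb, rfl⟩
    simp only [Function.comp_apply, f.symm_apply_apply, hf]
    rw [← hr₀, ← ht₀, ← Real.div_rpow (by positivity) (by positivity)]
    exact biLipschitz_bounds_rpow hC (by positivity) dist_nonneg hs.le (hg a ha b hb)

end Snowflake

theorem snowflake_isBPI_general {X : Type*} (m m' : MetricSpace X) (α s : ℝ)
    (hα : 0 < α) (hs : 0 < s)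
    (hd : ∀ x y : X, distOf m' x y = distOf m x y ^ s)
    (hBPI : IsBPIWith m α)
    (hunb : ∀ R : ℝ, ∃ x y : X, R < distOf m x y) :
    IsBPIWith m' (α / s) ∧ ∀ R : ℝ, ∃ x y : X, R < distOf m' x y :=
  ⟨@IsBPIWith.of_dist_eq_rpow X X m m' s (Equiv.refl X) hs hd α hα.le hBPI,
    @exists_lt_dist_of_dist_eq_rpow X X m m' s id hs hd hunb⟩

/-- If `(X, d)` is an unbounded BPI space of dimension `α` and `0 < s < 1`, then the
snowflaked space `(X, d^s)` is an unbounded BPI space of dimension `α/s`. -/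
theorem snowflake_isBPI {X : Type*} (m m' : MetricSpace X) (α s : ℝ)
    (hα : 0 < α) (hs : 0 < s) (hs1 : s < 1)
    (hd : ∀ x y : X, distOf m' x y = distOf m x y ^ s)
    (hBPI : IsBPIWith m α)
    (hunb : ∀ R : ℝ, ∃ x y : X, R < distOf m x y) :
    IsBPIWith m' (α / s) ∧ ∀ R : ℝ, ∃ x y : X, R < distOf m' x y :=
  snowflake_isBPI_general m m' α s hα hs hd hBPI hunb
end

section
/- For any s_1, ..., s_N ∈ (0,1], the space ℝ^N with distance d_s(x,y) = Σ_{k=1}^N |x_k - y_k|^{s_k} is a BPI space of dimension α = Σ_{k=1}^N 1/s_k. -/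
open scoped ENNReal

/-!
Coordinate `k` of the snowflake product is Hölder of exponent `1 / sₖ`, so a set of diameter `D`
projects into intervals of lengths `D ^ (1 / sₖ)` and has Lebesgue measure at most `D ^ α`;
hence `μH[α]` dominates Lebesgue measure. Conversely, a box with half-sides `ρ ^ (1 / sₖ)` is
covered by at most `3 ^ N * n ^ α` boxes of diameter `N * ρ / n`, which bounds its `μH[α]` by
a multiple of `ρ ^ α`. Balls are squeezed between such boxes, so the space is Ahlfors
`α`-regular, and the affine maps `z ↦ y + λ ^ (1 / sₖ) (z - x)` multiply all distances by
exactly `λ`, so any ball is carried onto any other by a similarity, with biLipschitz constant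
`1`.
-/

open MeasureTheory Metric Set Filter Topology

variable {X : Type*}

theorem ENNReal.rpow_sum_of_nonneg {ι : Type*} (a : ℝ≥0∞) {t : Finset ι} {e : ι → ℝ}
    (he : ∀ i ∈ t, 0 ≤ e i) : a ^ ∑ i ∈ t, e i = ∏ i ∈ t, a ^ e i := by
  classical
  induction t using Finset.induction_on with
  | empty => simp
  | insert i t hi ih =>
    rw [Finset.sum_insert hi, Finset.prod_insert hi,
      ENNReal.rpow_add_of_nonneg _ _ (he i (by simp))
        (Finset.sum_nonneg fun j hj => he j (by simp [hj])),
      ih fun j hj => he j (by simp [hj])]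

theorem exists_fin_ceil_mem_Icc {a z L δ : ℝ} (hδ : 0 < δ) (ha : a ≤ z) (hz : z < a + L) :
    ∃ i : Fin ⌈L / δ⌉₊, z ∈ Icc (a + i * δ) (a + i * δ + δ) := by
  have hq : 0 ≤ (z - a) / δ := div_nonneg (sub_nonneg.2 ha) hδ.le
  refine ⟨⟨⌊(z - a) / δ⌋₊, Nat.floor_lt_ceil_of_lt_of_pos ?_ (div_pos (by linarith) hδ)⟩, ?_, ?_⟩
  · gcongr
    linarith
  · have h := Nat.floor_le hq
    rw [le_div_iff₀ hδ] at h
    dsimp only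
    linarith
  · have h := Nat.lt_floor_add_one ((z - a) / δ)
    rw [div_lt_iff₀ hδ] at h
    dsimp only
    linarith

theorem prod_ceil_two_mul_rpow_le {N : ℕ} {n : ℝ} (hn : 1 ≤ n) {e : Fin N → ℝ}
    (he : ∀ k, 0 ≤ e k) : ∏ k, (⌈2 * n ^ e k⌉₊ : ℝ) ≤ 3 ^ N * n ^ ∑ k, e k := by
  calc ∏ k, (⌈2 * n ^ e k⌉₊ : ℝ) ≤ ∏ k, 3 * n ^ e k := by
        refine Finset.prod_le_prod (fun _ _ => by positivity) fun k _ => ?_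
        have h1 : 1 ≤ n ^ e k := Real.one_le_rpow hn (he k)
        have h2 := Nat.ceil_lt_add_one (R := ℝ) (by positivity : 0 ≤ 2 * n ^ e k)
        linarith
    _ = 3 ^ N * n ^ ∑ k, e k := by
        rw [Finset.prod_mul_distrib, Finset.prod_const, Finset.card_univ, Fintype.card_fin,
          Real.rpow_sum_of_nonneg (by linarith) fun k _ => he k]

section BPI

variable [MetricSpace X] [MeasurableSpace X] [BorelSpace X]

theorem hMeas_eq_hausdorffMeasure (α : ℝ) (A : Set X) :
    hMeas ‹MetricSpace X› α A = μH[α] A := by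
  obtain ⟨rfl⟩ := ‹BorelSpace X›
  rfl

theorem ahlforsWith_of_ball_bounds [CompleteSpace X] {α C : ℝ} (hC : 0 < C)
    (hball : ∀ (x : X) (ρ : ℝ), 0 < ρ → ENNReal.ofReal (C⁻¹ * ρ ^ α) ≤ μH[α] (ball x ρ) ∧
      μH[α] (ball x ρ) ≤ ENNReal.ofReal (C * ρ ^ α)) :
    AhlforsWith ‹MetricSpace X› α := by
  refine ⟨‹_›, ENNReal.ofReal C, by simpa, ENNReal.ofReal_ne_top, fun x r hr hrt _ => ?_⟩
  obtain ⟨ρ, hρ, rfl⟩ : ∃ ρ : ℝ, 0 < ρ ∧ ENNReal.ofReal ρ = r :=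
    ⟨r.toReal, ENNReal.toReal_pos hr.ne' hrt, ENNReal.ofReal_toReal hrt⟩
  -- `EMetric.ball` is a deprecated alias of `eball`, which `rw` does not see through
  change _ ≤ hMeas _ α (eball x _) ∧ hMeas _ α (eball x _) ≤ _
  rw [hMeas_eq_hausdorffMeasure, eball_ofReal, ← ENNReal.ofReal_inv_of_pos hC,
    ENNReal.ofReal_rpow_of_pos hρ, ← ENNReal.ofReal_mul (by positivity),
    ← ENNReal.ofReal_mul hC.le]
  exact hball x ρ hρ

theorem isBPIWith_of_dilations [CompleteSpace X] {α C : ℝ} (hC : 0 < C)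
    (hball : ∀ (x : X) (ρ : ℝ), 0 < ρ → ENNReal.ofReal (C⁻¹ * ρ ^ α) ≤ μH[α] (ball x ρ) ∧
      μH[α] (ball x ρ) ≤ ENNReal.ofReal (C * ρ ^ α))
    (hdil : ∀ (x y : X) (c : ℝ), 0 < c →
      ∃ f : X → X, f x = y ∧ ∀ a b, dist (f a) (f b) = c * dist a b) :
    IsBPIWith ‹MetricSpace X› α := by
  refine ⟨ahlforsWith_of_ball_bounds hC hball, 1, C⁻¹ / 2 ^ α, one_pos, by positivity,
    fun x y r t hr ht _ _ => ⟨closedBall x (r / 2), isClosed_closedBall,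
      closedBall_subset_ball (by linarith), ?_⟩⟩
  have hθ : C⁻¹ / 2 ^ α * r ^ α = C⁻¹ * (r / 2) ^ α := by
    rw [Real.div_rpow hr.le zero_le_two]
    ring
  rw [hMeas_eq_hausdorffMeasure, hθ]
  refine ⟨(hball x (r / 2) (by positivity)).1.trans (measure_mono ball_subset_closedBall), ?_⟩
  obtain ⟨f, hfx, hf⟩ := hdil x y (t / r) (by positivity)
  refine ⟨f, fun a ha => ?_, fun a _ b _ => by simp [hf]⟩
  rw [mem_ball, ← hfx, hf]
  calc t / r * dist a x ≤ t / r * (r / 2) := by gcongr; exact mem_closedBall.1 ha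
    _ < t := by field_simp; linarith

end BPI

/-- A separate type `X` keeps the sup-metric instance of `Fin N → ℝ` away from the snowflake
metric. -/
def IsSnowflakeChart {N : ℕ} [Dist X] (s : Fin N → ℝ) (φ : X ≃ (Fin N → ℝ)) : Prop :=
  ∀ x y, dist x y = ∑ k, |φ x k - φ y k| ^ s k

namespace IsSnowflakeChart

variable {N : ℕ} {s : Fin N → ℝ} {φ : X ≃ (Fin N → ℝ)} [MetricSpace X]

theorem rpow_abs_sub_le_dist (hφ : IsSnowflakeChart s φ) (a b : X) (k : Fin N) :
    |φ a k - φ b k| ^ s k ≤ dist a b := by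
  rw [hφ]
  exact Finset.single_le_sum (f := fun j => |φ a j - φ b j| ^ s j)
    (fun j _ => Real.rpow_nonneg (abs_nonneg _) _) (Finset.mem_univ k)

theorem abs_sub_le_dist_rpow (hφ : IsSnowflakeChart s φ) (hs : ∀ k, 0 < s k) (a b : X)
    (k : Fin N) : |φ a k - φ b k| ≤ dist a b ^ (s k)⁻¹ := by
  rw [← Real.rpow_rpow_inv (abs_nonneg (φ a k - φ b k)) (hs k).ne']
  exact Real.rpow_le_rpow (by positivity) (hφ.rpow_abs_sub_le_dist a b k) (inv_nonneg.2 (hs k).le)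

theorem abs_sub_lt_rpow (hφ : IsSnowflakeChart s φ) (hs : ∀ k, 0 < s k) {a b : X} {ρ : ℝ}
    (h : dist a b < ρ) (k : Fin N) : |φ a k - φ b k| < ρ ^ (s k)⁻¹ :=
  (hφ.abs_sub_le_dist_rpow hs a b k).trans_lt <|
    Real.rpow_lt_rpow dist_nonneg h (inv_pos.2 (hs k))

theorem holderWith_apply (hφ : IsSnowflakeChart s φ) (hs : ∀ k, 0 < s k) (k : Fin N) :
    HolderWith 1 (s k)⁻¹.toNNReal fun x => φ x k := by
  intro a b
  rw [ENNReal.coe_one, one_mul, Real.coe_toNNReal _ (inv_nonneg.2 (hs k).le), edist_dist,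
    edist_dist, ENNReal.ofReal_rpow_of_nonneg dist_nonneg (inv_nonneg.2 (hs k).le)]
  exact ENNReal.ofReal_le_ofReal (hφ.abs_sub_le_dist_rpow hs a b k)

theorem continuous_symm (hφ : IsSnowflakeChart s φ) (hs : ∀ k, 0 < s k) :
    Continuous φ.symm := by
  refine continuous_iff_continuousAt.2 fun u => tendsto_iff_dist_tendsto_zero.2 ?_
  have hcont : Continuous fun v : Fin N → ℝ => ∑ k, |v k - u k| ^ s k :=
    continuous_finsetSum _ fun k _ =>
      ((continuous_apply k).sub continuous_const).abs.rpow_const fun _ => Or.inr (hs k).le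
  have hlim : Tendsto (fun v => ∑ k, |v k - u k| ^ s k) (𝓝 u) (𝓝 0) := by
    simpa [Real.zero_rpow (hs _).ne'] using hcont.tendsto u
  simpa only [hφ (φ.symm _), Equiv.apply_symm_apply] using hlim

theorem completeSpace (hφ : IsSnowflakeChart s φ) (hs : ∀ k, 0 < s k) : CompleteSpace X := by
  have hφu : UniformContinuous φ := uniformContinuous_pi.2 fun k =>
    (hφ.holderWith_apply hs k).uniformContinuous (by simpa using hs k)
  refine Metric.complete_of_cauchySeq_tendsto fun u hu => ?_
  obtain ⟨L, hL⟩ := cauchySeq_tendsto_of_complete (hφu.comp_cauchySeq hu)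
  exact ⟨φ.symm L, by simpa [Function.comp_def] using ((hφ.continuous_symm hs).tendsto L).comp hL⟩

theorem exists_dilation (hφ : IsSnowflakeChart s φ) (hs : ∀ k, 0 < s k) (x y : X) {c : ℝ}
    (hc : 0 < c) : ∃ f : X → X, f x = y ∧ ∀ a b, dist (f a) (f b) = c * dist a b := by
  refine ⟨fun z => φ.symm fun k => φ y k + c ^ (s k)⁻¹ * (φ z k - φ x k), by simp, fun a b => ?_⟩
  simp only [hφ a b, hφ (φ.symm _), Equiv.apply_symm_apply, Finset.mul_sum,
    add_sub_add_left_eq_sub, ← mul_sub, sub_sub_sub_cancel_right, abs_mul,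
    abs_of_pos (Real.rpow_pos_of_pos hc _)]
  refine Finset.sum_congr rfl fun k _ => ?_
  rw [Real.mul_rpow (by positivity) (abs_nonneg _), Real.rpow_inv_rpow hc.le (hs k).ne']

theorem volume_image_le_ediam_rpow (hφ : IsSnowflakeChart s φ) (hs : ∀ k, 0 < s k)
    (S : Set X) : volume (φ '' S) ≤ ediam S ^ ∑ k, (s k)⁻¹ :=
  calc volume (φ '' S) ≤ ∏ k, ediam (Function.eval k '' (φ '' S)) :=
        Real.volume_pi_le_prod_diam _
    _ ≤ ∏ k, ediam S ^ (s k)⁻¹ := by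
        gcongr with k
        rw [image_image]
        simpa [(hs k).le] using (hφ.holderWith_apply hs k).ediam_image_le S
    _ = ediam S ^ ∑ k, (s k)⁻¹ :=
        (ENNReal.rpow_sum_of_nonneg _ fun k _ => inv_nonneg.2 (hs k).le).symm

theorem volume_image_le_hausdorffMeasure [MeasurableSpace X] [BorelSpace X]
    (hφ : IsSnowflakeChart s φ) (hs : ∀ k, 0 < s k) (S : Set X) :
    volume (φ '' S) ≤ μH[∑ k, (s k)⁻¹] S := by
  have h := OuterMeasure.le_mkMetric (fun r => r ^ ∑ k, (s k)⁻¹)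
    (OuterMeasure.comap φ (volume : Measure (Fin N → ℝ)).toOuterMeasure) ⊤ ENNReal.zero_lt_top
    (fun S _ => hφ.volume_image_le_ediam_rpow hs S) S
  rwa [← Measure.mkMetric_toOuterMeasure, OuterMeasure.comap_apply] at h

theorem ball_subset_preimage_pi_ball (hφ : IsSnowflakeChart s φ) (hs : ∀ k, 0 < s k) (x : X)
    (ρ : ℝ) : ball x ρ ⊆ φ ⁻¹' univ.pi fun k => ball (φ x k) (ρ ^ (s k)⁻¹) :=
  fun _ hz => mem_univ_pi.2 fun k => by
    rw [mem_ball, Real.dist_eq]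
    exact hφ.abs_sub_lt_rpow hs hz k

theorem preimage_pi_ball_subset_ball (hφ : IsSnowflakeChart s φ) (hs : ∀ k, 0 < s k)
    (hN : 0 < N) (x : X) {ρ : ℝ} (hρ : 0 < ρ) :
    φ ⁻¹' (univ.pi fun k => ball (φ x k) ((ρ / N) ^ (s k)⁻¹)) ⊆ ball x ρ := by
  intro z hz
  have hcoord : ∀ k, |φ z k - φ x k| ^ s k < ρ / N := fun k => by
    have h := mem_ball.1 (hz k (mem_univ k))
    rw [Real.dist_eq] at h
    simpa [Real.rpow_inv_rpow (by positivity : 0 ≤ ρ / N) (hs k).ne'] using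
      Real.rpow_lt_rpow (abs_nonneg _) h (hs k)
  rw [mem_ball, hφ]
  calc ∑ k, |φ z k - φ x k| ^ s k < ∑ _k : Fin N, ρ / N :=
        Finset.sum_lt_sum_of_nonempty (Finset.univ_nonempty_iff.2 ⟨⟨0, hN⟩⟩) fun k _ => hcoord k
    _ = ρ := by
        rw [Finset.sum_const, Finset.card_univ, Fintype.card_fin, nsmul_eq_mul]
        field_simp

theorem ediam_preimage_pi_Icc_le (hφ : IsSnowflakeChart s φ) (hs : ∀ k, 0 < s k)
    (a δ : Fin N → ℝ) :
    ediam (φ ⁻¹' univ.pi fun k => Icc (a k) (a k + δ k)) ≤ ENNReal.ofReal (∑ k, δ k ^ s k) := by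
  refine ediam_le fun u hu v hv => ?_
  rw [edist_dist, hφ]
  refine ENNReal.ofReal_le_ofReal (Finset.sum_le_sum fun k _ =>
    Real.rpow_le_rpow (abs_nonneg _) ?_ (hs k).le)
  have hu' := hu k (mem_univ k)
  have hv' := hv k (mem_univ k)
  rw [abs_sub_le_iff]
  constructor <;> linarith [hu'.1, hu'.2, hv'.1, hv'.2]

theorem hausdorffMeasure_preimage_pi_ball_le [MeasurableSpace X] [BorelSpace X]
    (hφ : IsSnowflakeChart s φ) (hs : ∀ k, 0 < s k) (c : Fin N → ℝ) {ρ : ℝ} (hρ : 0 < ρ) :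
    μH[∑ k, (s k)⁻¹] (φ ⁻¹' univ.pi fun k => ball (c k) (ρ ^ (s k)⁻¹))
      ≤ ENNReal.ofReal (3 ^ N * (N * ρ) ^ ∑ k, (s k)⁻¹) := by
  set α := ∑ k, (s k)⁻¹
  have hα : 0 ≤ α := Finset.sum_nonneg fun k _ => inv_nonneg.2 (hs k).le
  -- the `n`-th grid: cells of side `(ρ / n) ^ (s k)⁻¹`, so of diameter at most `N * ρ / n`,
  -- starting at the lower corner `a` of the box, with `⌈2 * n ^ (s k)⁻¹⌉₊` cells along axis `k`
  set δ : ℕ → Fin N → ℝ := fun n k => (ρ / n) ^ (s k)⁻¹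
  set a : Fin N → ℝ := fun k => c k - ρ ^ (s k)⁻¹
  let cell (n : ℕ) (i : ∀ k, Fin ⌈2 * ρ ^ (s k)⁻¹ / δ n k⌉₊) : Set X :=
    φ ⁻¹' univ.pi fun k => Icc (a k + i k * δ n k) (a k + i k * δ n k + δ n k)
  have hdiam : ∀ n ≥ 1, ∀ i, ediam (cell n i) ≤ ENNReal.ofReal (N * ρ / n) := by
    intro n _ i
    refine (hφ.ediam_preimage_pi_Icc_le hs _ _).trans (le_of_eq ?_)
    simp [δ, Real.rpow_inv_rpow (by positivity : 0 ≤ ρ / n) (hs _).ne', mul_div_assoc]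
  have hcover : ∀ n ≥ 1, φ ⁻¹' (univ.pi fun k => ball (c k) (ρ ^ (s k)⁻¹)) ⊆ ⋃ i, cell n i := by
    intro n hn z hz
    have hz' : ∀ k, a k ≤ φ z k ∧ φ z k < a k + 2 * ρ ^ (s k)⁻¹ := fun k => by
      have h := abs_sub_lt_iff.1 (mem_ball.1 (hz k (mem_univ k)))
      constructor <;> simp only [a] <;> linarith [h.1, h.2]
    choose i hi using fun k =>
      exists_fin_ceil_mem_Icc (by positivity : 0 < δ n k) (hz' k).1 (hz' k).2
    exact mem_iUnion.2 ⟨i, fun k _ => hi k⟩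
  have hsum : ∀ n ≥ 1, ∑ i, ediam (cell n i) ^ α ≤ ENNReal.ofReal (3 ^ N * (N * ρ) ^ α) := by
    intro n hn
    have hn' : (1 : ℝ) ≤ n := by exact_mod_cast hn
    have hratio : ∀ k, 2 * ρ ^ (s k)⁻¹ / δ n k = 2 * (n : ℝ) ^ (s k)⁻¹ := fun k => by
      rw [mul_div_assoc, ← Real.div_rpow hρ.le (by positivity), div_div_cancel₀ hρ.ne']
    have hcard : (Fintype.card (∀ k, Fin ⌈2 * ρ ^ (s k)⁻¹ / δ n k⌉₊) : ℝ) ≤ 3 ^ N * n ^ α := by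
      simpa [hratio] using prod_ceil_two_mul_rpow_le hn' fun k => inv_nonneg.2 (hs k).le
    calc ∑ i, ediam (cell n i) ^ α ≤ ∑ _i, ENNReal.ofReal (N * ρ / n) ^ α := by
          gcongr with i
          exact hdiam n hn i
      _ = ENNReal.ofReal
            (Fintype.card (∀ k, Fin ⌈2 * ρ ^ (s k)⁻¹ / δ n k⌉₊) * (N * ρ / n) ^ α) := by
          rw [Finset.sum_const, Finset.card_univ, nsmul_eq_mul,
            ENNReal.ofReal_rpow_of_nonneg (by positivity) hα, ENNReal.ofReal_mul (by positivity),
            ENNReal.ofReal_natCast]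
      _ ≤ ENNReal.ofReal (3 ^ N * (N * ρ) ^ α) := by
          refine ENNReal.ofReal_le_ofReal
            ((mul_le_mul_of_nonneg_right hcard (by positivity)).trans (le_of_eq ?_))
          rw [mul_assoc, ← Real.mul_rpow (by positivity) (by positivity),
            mul_div_cancel₀ _ (by positivity)]
  have hlim : Tendsto (fun n : ℕ => ENNReal.ofReal (N * ρ / n)) atTop (𝓝 0) := by
    simpa using ENNReal.tendsto_ofReal (tendsto_const_div_atTop_nhds_zero_nat (N * ρ))
  calc μH[α] _ ≤ liminf (fun n => ∑ i, ediam (cell n i) ^ α) atTop :=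
        Measure.hausdorffMeasure_le_liminf_sum _ _ _ hlim cell (eventually_atTop.2 ⟨1, hdiam⟩)
          (eventually_atTop.2 ⟨1, hcover⟩)
    _ ≤ _ := liminf_le_of_frequently_le' (eventually_atTop.2 ⟨1, hsum⟩).frequently

theorem le_hausdorffMeasure_ball [MeasurableSpace X] [BorelSpace X] (hφ : IsSnowflakeChart s φ)
    (hs : ∀ k, 0 < s k) (hN : 0 < N) (x : X) {ρ : ℝ} (hρ : 0 < ρ) :
    ENNReal.ofReal ((3 ^ N * (N : ℝ) ^ ∑ k, (s k)⁻¹)⁻¹ * ρ ^ ∑ k, (s k)⁻¹)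
      ≤ μH[∑ k, (s k)⁻¹] (ball x ρ) := by
  set α := ∑ k, (s k)⁻¹
  have hNpos : (0 : ℝ) < N := by exact_mod_cast hN
  have hconst : (3 ^ N * (N : ℝ) ^ α)⁻¹ * ρ ^ α ≤ ∏ k, 2 * (ρ / N) ^ (s k)⁻¹ := by
    rw [Finset.prod_mul_distrib, Finset.prod_const, Finset.card_univ, Fintype.card_fin,
      ← Real.rpow_sum_of_nonneg (by positivity) fun k _ => inv_nonneg.2 (hs k).le,
      Real.div_rpow hρ.le hNpos.le, div_eq_inv_mul]
    have h3 : (N : ℝ) ^ α ≤ 3 ^ N * N ^ α :=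
      le_mul_of_one_le_left (by positivity) (one_le_pow₀ (by norm_num))
    have h2 : (1 : ℝ) ≤ 2 ^ N := one_le_pow₀ (by norm_num)
    calc (3 ^ N * (N : ℝ) ^ α)⁻¹ * ρ ^ α ≤ ((N : ℝ) ^ α)⁻¹ * ρ ^ α := by gcongr
      _ ≤ 2 ^ N * (((N : ℝ) ^ α)⁻¹ * ρ ^ α) := le_mul_of_one_le_left (by positivity) h2
  calc ENNReal.ofReal ((3 ^ N * (N : ℝ) ^ α)⁻¹ * ρ ^ α)
      ≤ volume (univ.pi fun k => ball (φ x k) ((ρ / N) ^ (s k)⁻¹)) := by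
        rw [volume_pi_pi]
        simp only [Real.volume_ball]
        rw [← ENNReal.ofReal_prod_of_nonneg fun k _ => by positivity]
        exact ENNReal.ofReal_le_ofReal hconst
    _ = volume (φ '' (φ ⁻¹' univ.pi fun k => ball (φ x k) ((ρ / N) ^ (s k)⁻¹))) := by
        rw [image_preimage_eq _ φ.surjective]
    _ ≤ μH[α] (φ ⁻¹' univ.pi fun k => ball (φ x k) ((ρ / N) ^ (s k)⁻¹)) :=
        hφ.volume_image_le_hausdorffMeasure hs _
    _ ≤ μH[α] (ball x ρ) := measure_mono (hφ.preimage_pi_ball_subset_ball hs hN x hρ)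

theorem hausdorffMeasure_ball_le [MeasurableSpace X] [BorelSpace X] (hφ : IsSnowflakeChart s φ)
    (hs : ∀ k, 0 < s k) (x : X) {ρ : ℝ} (hρ : 0 < ρ) :
    μH[∑ k, (s k)⁻¹] (ball x ρ)
      ≤ ENNReal.ofReal (3 ^ N * (N : ℝ) ^ (∑ k, (s k)⁻¹) * ρ ^ ∑ k, (s k)⁻¹) := by
  rw [mul_assoc, ← Real.mul_rpow (Nat.cast_nonneg N) hρ.le]
  exact (measure_mono (hφ.ball_subset_preimage_pi_ball hs x ρ)).trans
    (hφ.hausdorffMeasure_preimage_pi_ball_le hs _ hρ)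

theorem isBPIWith (hφ : IsSnowflakeChart s φ) (hs : ∀ k, 0 < s k) (hN : 0 < N) :
    IsBPIWith ‹MetricSpace X› (∑ k, (s k)⁻¹) := by
  borelize X
  have := hφ.completeSpace hs
  exact isBPIWith_of_dilations (by positivity)
    (fun x ρ hρ => ⟨hφ.le_hausdorffMeasure_ball hs hN x hρ, hφ.hausdorffMeasure_ball_le hs x hρ⟩)
    fun x y c hc => hφ.exists_dilation hs x y hc

end IsSnowflakeChart

theorem product_snowflakes_isBPI_general (N : ℕ) (hN : 1 ≤ N) (s : Fin N → ℝ)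
    (hs0 : ∀ k, 0 < s k)
    (m : MetricSpace (Fin N → ℝ))
    (hd : ∀ x y : Fin N → ℝ, distOf m x y = ∑ k, |x k - y k| ^ s k) :
    IsBPIWith m (∑ k, (s k)⁻¹) :=
  letI := m
  IsSnowflakeChart.isBPIWith (φ := Equiv.refl _) hd hs0 hN

/-- For any `s₁, …, s_N ∈ (0,1]`, the space `ℝ^N` with the distance
`d_s(x,y) = Σₖ |xₖ - yₖ|^{sₖ}` is a BPI space of dimension `α = Σₖ 1/sₖ`. -/
theorem product_snowflakes_isBPI (N : ℕ) (hN : 1 ≤ N) (s : Fin N → ℝ)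
    (hs0 : ∀ k, 0 < s k) (hs1 : ∀ k, s k ≤ 1)
    (m : MetricSpace (Fin N → ℝ))
    (hd : ∀ x y : Fin N → ℝ, distOf m x y = ∑ k, |x k - y k| ^ s k) :
    IsBPIWith m (∑ k, (s k)⁻¹) :=
  product_snowflakes_isBPI_general N hN s hs0 m hd
end

section
/- Fix l ∈ ℕ, h = 1/2^l, and define the set of shortcuts S = ⋃_{n≥1} S_n where S_n = {(h^{n-1}(m+1/2), h^{n-1}(m+1/2) + h^{n+1}) : m ∈ ℤ}. Let n ≥ 0 and m ∈ ℤ, and let I = [h^n·m, h^n·(m+1)] be an interval without shortcut at the ends (i.e., no x with (h^n m, x) ∈ S ∪ S^{-1} or (x, h^n(m+1)) ∈ S ∪ S^{-1}). Then for every shortcut (p,q) ∈ S, p ∈ I if and only if q ∈ I. -/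
/-- The self-similar set of shortcuts on `ℝ` with parameter `h = 1/2^l`:
the shortcuts of level `n ≥ 1` are the pairs `(h^{n-1}(m+1/2), h^{n-1}(m+1/2) + h^{n+1})`
for `m ∈ ℤ` (here indexed by `j = n - 1 ∈ ℕ`). -/
def shortcuts (l : ℕ) : Set (ℝ × ℝ) :=
  {pq | ∃ (j : ℕ) (m : ℤ),
    pq.1 = ((1 : ℝ) / 2 ^ l) ^ j * (m + 1 / 2) ∧
    pq.2 = ((1 : ℝ) / 2 ^ l) ^ j * (m + 1 / 2) + ((1 : ℝ) / 2 ^ l) ^ (j + 2)}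

/-- `[a, b]` is an interval without shortcut at the ends: no shortcut (in either
orientation) has `a` or `b` as an endpoint. -/
def NoShortcutAtEnds (l : ℕ) (a b : ℝ) : Prop :=
  ∀ x : ℝ, (a, x) ∉ shortcuts l ∧ (x, a) ∉ shortcuts l ∧
    (b, x) ∉ shortcuts l ∧ (x, b) ∉ shortcuts l

/-!
Write `h = 2⁻ˡ`. A shortcut of level `j + 1` starts at a point `p` of the lattice `h^(j+1) ℤ` and
has length `h^(j+2) ≤ h^(j+1)`, while the ends of `I` lie on the lattice `hⁿ ℤ`.
If `n ≤ j + 1`, both ends of `I` lie on `h^(j+1) ℤ`, which has no point strictly between `p` and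
`q`, so the shortcut cannot cross an end of `I`. If `j + 2 ≤ n`, both `p` and `q` lie on `hⁿ ℤ`,
and the only lattice points in `I` are its ends, which the shortcut avoids; so neither `p` nor
`q` lies in `I`.
-/

open AddSubgroup Set

section OrderedGroup

variable {α : Type*} [AddCommGroup α] [LinearOrder α] [IsOrderedAddMonoid α] {d x y : α}

theorem add_le_of_lt_of_mem_zmultiples (hx : x ∈ zmultiples d) (hy : y ∈ zmultiples d)
    (hxy : x < y) : x + d ≤ y := by
  rcases le_or_gt d 0 with hd | hd
  · exact (add_le_of_nonpos_right hd).trans hxy.le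
  obtain ⟨a, rfl⟩ := mem_zmultiples_iff.mp hx
  obtain ⟨b, rfl⟩ := mem_zmultiples_iff.mp hy
  have hab : a + 1 ≤ b := (zsmul_lt_zsmul_iff_left hd).mp hxy
  simpa [add_zsmul] using zsmul_le_zsmul_left hd.le hab

theorem notMem_Ioo_of_mem_zmultiples {p q : α} (hp : p ∈ zmultiples d) (hx : x ∈ zmultiples d)
    (hq : q ≤ p + d) : x ∉ Ioo p q := fun ⟨hpx, hxq⟩ =>
  (hq.trans (add_le_of_lt_of_mem_zmultiples hp hx hpx)).not_gt hxq

theorem notMem_Icc_of_mem_zmultiples {a b : α} (ha : a ∈ zmultiples d) (hx : x ∈ zmultiples d)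
    (hb : b ≤ a + d) (hxa : x ≠ a) (hxb : x ≠ b) : x ∉ Icc a b := fun ⟨hax, hxb'⟩ =>
  ((lt_of_le_of_ne hxb' hxb).trans_le hb).not_ge
    (add_le_of_lt_of_mem_zmultiples ha hx (lt_of_le_of_ne hax hxa.symm))

end OrderedGroup

theorem mem_Icc_iff_of_notMem_Ioo {α : Type*} [LinearOrder α] {a b p q : α} (hpq : p ≤ q)
    (ha : a ∉ Ioo p q) (hb : b ∉ Ioo p q) (hpb : p ≠ b) (hqa : q ≠ a) :
    p ∈ Icc a b ↔ q ∈ Icc a b := by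
  simp only [mem_Icc, mem_Ioo, not_and, not_lt] at *
  constructor
  · rintro ⟨hap, hpb'⟩
    exact ⟨hap.trans hpq, hb (lt_of_le_of_ne hpb' hpb)⟩
  · rintro ⟨haq, hqb⟩
    exact ⟨not_lt.mp fun hpa => hqa ((ha hpa).antisymm haq), hpq.trans hqb⟩

section InversePowers

variable {N : ℤ}

theorem one_div_pow_mem_zmultiples (hN : N ≠ 0) {i k : ℕ} (hik : i ≤ k) :
    ((1 : ℝ) / N) ^ i ∈ zmultiples (((1 : ℝ) / N) ^ k) := by
  obtain ⟨t, rfl⟩ := Nat.exists_eq_add_of_le hik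
  refine mem_zmultiples_iff.mpr ⟨N ^ t, ?_⟩
  rw [zsmul_eq_mul, Int.cast_pow, pow_add, mul_left_comm, ← mul_pow,
    mul_one_div_cancel (Int.cast_ne_zero.mpr hN), one_pow, mul_one]

theorem one_div_pow_mul_add_half_mem_zmultiples (hN : Even N) (hN0 : N ≠ 0) (j : ℕ) (m : ℤ) :
    ((1 : ℝ) / N) ^ j * (m + 1 / 2) ∈ zmultiples (((1 : ℝ) / N) ^ (j + 1)) := by
  obtain ⟨K, rfl⟩ := hN
  refine mem_zmultiples_iff.mpr ⟨(2 * m + 1) * K, ?_⟩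
  have : (K : ℝ) ≠ 0 := Int.cast_ne_zero.mpr (by omega)
  rw [zsmul_eq_mul, pow_succ]
  push_cast
  field_simp
  ring

end InversePowers

theorem one_div_two_pow_eq_intCast (l : ℕ) : (1 : ℝ) / 2 ^ l = 1 / ((2 ^ l : ℤ) : ℝ) := by
  push_cast
  rfl

theorem exists_level_of_mem_shortcuts {l : ℕ} (hl : 1 ≤ l) {p q : ℝ}
    (hpq : (p, q) ∈ shortcuts l) :
    ∃ j : ℕ, p ∈ zmultiples (((1 : ℝ) / 2 ^ l) ^ (j + 1)) ∧
      q = p + ((1 : ℝ) / 2 ^ l) ^ (j + 2) := by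
  obtain ⟨j, m, hp, hq⟩ := hpq
  dsimp only at hp hq
  refine ⟨j, ?_, hq.trans (congrArg (· + _) hp.symm)⟩
  rw [hp, one_div_two_pow_eq_intCast]
  exact one_div_pow_mul_add_half_mem_zmultiples ((Int.even_pow' (by omega)).mpr even_two)
    (by positivity) j m

theorem NoShortcutAtEnds.ne_of_mem_shortcuts {l : ℕ} {a b p q : ℝ} (hI : NoShortcutAtEnds l a b)
    (hpq : (p, q) ∈ shortcuts l) : p ≠ a ∧ p ≠ b ∧ q ≠ a ∧ q ≠ b :=
  ⟨fun e => (hI q).1 (e ▸ hpq), fun e => (hI q).2.2.1 (e ▸ hpq),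
    fun e => (hI p).2.1 (e ▸ hpq), fun e => (hI p).2.2.2 (e ▸ hpq)⟩

/-- If `I = [h^n m, h^n (m+1)]` is an interval without shortcut at the ends, then for
every shortcut `(p, q)`, `p ∈ I` if and only if `q ∈ I`. -/
theorem shortcut_mem_interval_iff (l : ℕ) (hl : 1 ≤ l) (n : ℕ) (m : ℤ)
    (hI : NoShortcutAtEnds l (((1 : ℝ) / 2 ^ l) ^ n * m) (((1 : ℝ) / 2 ^ l) ^ n * (m + 1))) :
    ∀ p q : ℝ, (p, q) ∈ shortcuts l →
      (p ∈ Set.Icc (((1 : ℝ) / 2 ^ l) ^ n * m) (((1 : ℝ) / 2 ^ l) ^ n * (m + 1)) ↔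
       q ∈ Set.Icc (((1 : ℝ) / 2 ^ l) ^ n * m) (((1 : ℝ) / 2 ^ l) ^ n * (m + 1))) := by
  intro p q hpq
  obtain ⟨hpa, hpb, hqa, hqb⟩ := hI.ne_of_mem_shortcuts hpq
  obtain ⟨j, hpG, hqp⟩ := exists_level_of_mem_shortcuts hl hpq
  set h : ℝ := 1 / 2 ^ l with hh
  have hpow {i k : ℕ} (hik : i ≤ k) : h ^ i ∈ zmultiples (h ^ k) := by
    rw [hh, one_div_two_pow_eq_intCast]
    exact one_div_pow_mem_zmultiples (by positivity) hik
  have ha : h ^ n * m ∈ zmultiples (h ^ n) := mul_comm (h ^ n) m ▸ intCast_mul_mem_zmultiples _ _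
  have hb : h ^ n * (m + 1) ∈ zmultiples (h ^ n) := by
    simpa [mul_comm] using intCast_mul_mem_zmultiples (h ^ n) (m + 1)
  rcases le_or_gt (j + 2) n with hjn | hnj
  · have hG : zmultiples (h ^ (j + 1)) ≤ zmultiples (h ^ n) := zmultiples_le.mpr (hpow (by omega))
    have hqG : q ∈ zmultiples (h ^ n) := hqp ▸ add_mem (hG hpG) (hpow hjn)
    have hba : h ^ n * (m + 1) ≤ h ^ n * m + h ^ n := (mul_add_one _ _).le
    exact iff_of_false (notMem_Icc_of_mem_zmultiples ha (hG hpG) hba hpa hpb)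
      (notMem_Icc_of_mem_zmultiples ha hqG hba hqa hqb)
  · have hG : zmultiples (h ^ n) ≤ zmultiples (h ^ (j + 1)) := zmultiples_le.mpr (hpow (by omega))
    have hh1 : h ≤ 1 := div_le_one_of_le₀ (one_le_pow₀ one_le_two) (by positivity)
    have hqle : q ≤ p + h ^ (j + 1) :=
      hqp ▸ (add_le_add_iff_left p).mpr (pow_le_pow_of_le_one (by positivity) hh1 (Nat.le_succ _))
    exact mem_Icc_iff_of_notMem_Ioo (hqp ▸ le_add_of_nonneg_right (by positivity))
      (notMem_Ioo_of_mem_zmultiples hpG (hG ha) hqle)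
      (notMem_Ioo_of_mem_zmultiples hpG (hG hb) hqle) hpb hqa
end

section
/- Let s ∈ (0,1), let R be the self-similar shortcut equivalence relation on ℝ (generated by S_n = {(h^{n-1}(m+1/2), h^{n-1}(m+1/2)+h^{n+1}) : m ∈ ℤ}, h = 1/2^l with l chosen so the shortcut conditions hold), and let d_R be the associated quotient semi-distance on (ℝ, |·|^s). Then every Lipschitz function f : ([0,1], d_R) → (ℝ, |x-y|^s) is constant. -/
/-!
Since `d_R ≤ |·|^s`, a Lipschitz `f` is Lipschitz for the Euclidean metric, and since related
points are at `d_R`-distance `0`, `f` agrees at the two ends of every shortcut. With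
`N = 4^l = h^{-2}`, the middle `N`-adic subinterval of the next generation inside any `N`-adic
interval of length `h^{2i}` is a shortcut of level `2i`. Telescoping over the `N` subintervals,
the increment of `f` over an `N`-adic interval is at most `(N-1)/N` times its Lipschitz bound;
iterating, it vanishes. So `f` is constant on the dense set of `N`-adic points of `[0, 1]`.
-/

/-- The quotient semi-distance associated with a distance function `d` and a relation `R`. -/
noncomputable def quotSemiDist {X : Type*} (d : X → X → ℝ) (R : X → X → Prop) (x y : X) : ℝ :=
  sInf {v : ℝ | ∃ (n : ℕ) (xs ys : ℕ → X),
    R x (xs 0) ∧ (∀ k < n, R (ys k) (xs (k + 1))) ∧ R (ys n) y ∧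
    v = ∑ k ∈ Finset.range (n + 1), d (xs k) (ys k)}

/-- The equivalence relation generated by the shortcuts. -/
def Rrel (l : ℕ) (x y : ℝ) : Prop :=
  (x, y) ∈ shortcuts l ∨ (y, x) ∈ shortcuts l ∨ x = y

open Set

section QuotSemiDist

variable {X : Type*} {d : X → X → ℝ} {R : X → X → Prop}

lemma quotSemiDist_nonneg (hd : ∀ a b, 0 ≤ d a b) (x y : X) : 0 ≤ quotSemiDist d R x y := by
  apply Real.sInf_nonneg
  rintro v ⟨n, xs, ys, -, -, -, rfl⟩
  exact Finset.sum_nonneg fun k _ => hd _ _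

lemma quotSemiDist_le (hd : ∀ a b, 0 ≤ d a b) {x y a b : X} (hxa : R x a) (hby : R b y) :
    quotSemiDist d R x y ≤ d a b := by
  refine csInf_le ⟨0, ?_⟩
    ⟨0, fun _ => a, fun _ => b, hxa, fun k hk => absurd hk k.not_lt_zero, hby, by simp⟩
  rintro v ⟨n, xs, ys, -, -, -, rfl⟩
  exact Finset.sum_nonneg fun k _ => hd _ _

lemma quotSemiDist_le_self (hd : ∀ a b, 0 ≤ d a b) (hR : ∀ a, R a a) (x y : X) :
    quotSemiDist d R x y ≤ d x y :=
  quotSemiDist_le hd (hR x) (hR y)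

lemma quotSemiDist_eq_zero_of_rel (hd : ∀ a b, 0 ≤ d a b) {x y : X} (hxy : R x y) (hyy : R y y)
    (hdyy : d y y = 0) : quotSemiDist d R x y = 0 :=
  le_antisymm (hdyy ▸ quotSemiDist_le hd hxy hyy) (quotSemiDist_nonneg hd x y)

end QuotSemiDist

lemma LipschitzOnWith.of_dist_rpow_le_mul {α β : Type*} [PseudoMetricSpace α]
    [PseudoMetricSpace β] {f : α → β} {s : Set α} {p : ℝ} {L : NNReal} (hp : 0 < p)
    (hf : ∀ x ∈ s, ∀ y ∈ s, dist (f x) (f y) ^ p ≤ L * dist x y ^ p) :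
    LipschitzOnWith (L ^ p⁻¹) f s := by
  refine LipschitzOnWith.of_dist_le_mul fun x hx y hy => ?_
  rw [NNReal.coe_rpow, ← Real.rpow_le_rpow_iff dist_nonneg (by positivity) hp,
    Real.mul_rpow (by positivity) dist_nonneg, Real.rpow_inv_rpow L.coe_nonneg hp.ne']
  exact hf x hx y hy

lemma eq_of_abs_sub_le_mul_pow {a b C q : ℝ} (hq0 : 0 ≤ q) (hq1 : q < 1)
    (h : ∀ k : ℕ, |a - b| ≤ C * q ^ k) : a = b := by
  have hlim : Filter.Tendsto (fun k : ℕ => C * q ^ k) Filter.atTop (nhds 0) := by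
    simpa using (tendsto_pow_atTop_nhds_zero_of_lt_one hq0 hq1).const_mul C
  have : |a - b| ≤ 0 := ge_of_tendsto' hlim h
  exact sub_eq_zero.mp (abs_nonpos_iff.mp this)

lemma abs_sub_le_pred_mul_of_step_eq {g : ℕ → ℝ} {N c : ℕ} {B : ℝ} (hc : c < N)
    (hgc : g (c + 1) = g c) (hB : ∀ i < N, |g (i + 1) - g i| ≤ B) :
    |g N - g 0| ≤ (N - 1) * B := by
  have hc' : c ∈ Finset.range N := Finset.mem_range.mpr hc
  calc |g N - g 0| = |∑ i ∈ Finset.range N, (g (i + 1) - g i)| := by rw [Finset.sum_range_sub]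
    _ ≤ ∑ i ∈ Finset.range N, |g (i + 1) - g i| := Finset.abs_sum_le_sum_abs _ _
    _ = ∑ i ∈ (Finset.range N).erase c, |g (i + 1) - g i| := by
      rw [← Finset.add_sum_erase _ _ hc', hgc, sub_self, abs_zero, zero_add]
    _ ≤ ∑ _i ∈ (Finset.range N).erase c, B :=
      Finset.sum_le_sum fun i hi => hB i (Finset.mem_range.mp (Finset.mem_of_mem_erase hi))
    _ = (N - 1) * B := by
      rw [Finset.sum_const, Finset.card_erase_of_mem hc', Finset.card_range, nsmul_eq_mul,
        Nat.cast_pred (by omega)]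

def HasNullSubcells (f : ℝ → ℝ) (N : ℕ) : Prop :=
  ∀ i m : ℕ, m + 1 ≤ N ^ i → ∃ c < N,
    f (((N * m + c + 1 : ℕ) : ℝ) / N ^ (i + 1)) = f (((N * m + c : ℕ) : ℝ) / N ^ (i + 1))

lemma mul_add_succ_le_pow_succ {N c i m : ℕ} (hc : c < N) (hm : m + 1 ≤ N ^ i) :
    N * m + c + 1 ≤ N ^ (i + 1) := by
  rw [pow_succ]
  nlinarith

lemma natCast_div_pow_mem_Icc {N i m : ℕ} (hm : m ≤ N ^ i) : (m : ℝ) / N ^ i ∈ Icc 0 1 :=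
  ⟨by positivity, div_le_one_of_le₀ (by exact_mod_cast hm) (by positivity)⟩

namespace HasNullSubcells

variable {f : ℝ → ℝ} {N : ℕ} {K : NNReal}

lemma abs_sub_le (hf : LipschitzOnWith K f (Icc 0 1)) (hnull : HasNullSubcells f N)
    (k : ℕ) {i m : ℕ} (hm : m + 1 ≤ N ^ i) :
    |f (((m + 1 : ℕ) : ℝ) / N ^ i) - f ((m : ℝ) / N ^ i)| ≤
      K * ((N - 1) / N) ^ k / N ^ i := by
  induction k generalizing i m with
  | zero =>
    have := hf.dist_le_mul _ (natCast_div_pow_mem_Icc hm) _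
      (natCast_div_pow_mem_Icc (Nat.le_of_succ_le hm))
    rw [Real.dist_eq, Real.dist_eq] at this
    refine this.trans_eq ?_
    rw [← sub_div, Nat.cast_succ, add_sub_cancel_left, abs_div, abs_one,
      abs_of_nonneg (by positivity)]
    ring
  | succ k ih =>
    obtain ⟨c, hc, hfc⟩ := hnull i m hm
    have hN : (N : ℝ) ≠ 0 := by exact_mod_cast (show N ≠ 0 by omega)
    have := abs_sub_le_pred_mul_of_step_eq
      (g := fun c' => f (((N * m + c' : ℕ) : ℝ) / N ^ (i + 1))) hc hfc
      fun c' hc' => ih (mul_add_succ_le_pow_succ hc' hm)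
    simp only [add_zero] at this
    convert this using 3
    · congr 1; push_cast; rw [pow_succ]; field_simp
    · congr 1; push_cast; rw [pow_succ]; field_simp
    · rw [pow_succ _ k, pow_succ _ i]; field_simp

lemma pos (hnull : HasNullSubcells f N) : 0 < N := by
  obtain ⟨c, hc, -⟩ := hnull 0 0 (by simp)
  omega

lemma apply_succ_div_pow (hf : LipschitzOnWith K f (Icc 0 1)) (hnull : HasNullSubcells f N)
    {i m : ℕ} (hm : m + 1 ≤ N ^ i) :
    f (((m + 1 : ℕ) : ℝ) / N ^ i) = f ((m : ℝ) / N ^ i) := by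
  have hN : (1 : ℝ) ≤ N := by exact_mod_cast hnull.pos
  refine eq_of_abs_sub_le_mul_pow (C := K / N ^ i) (q := (N - 1) / N) (by bound) ?_
    fun k => (hnull.abs_sub_le hf k hm).trans_eq (by ring)
  rw [div_lt_one (by positivity)]
  linarith

lemma apply_div_pow (hf : LipschitzOnWith K f (Icc 0 1)) (hnull : HasNullSubcells f N)
    {i m : ℕ} (hm : m ≤ N ^ i) : f ((m : ℝ) / N ^ i) = f 0 := by
  induction m with
  | zero => simp
  | succ m ih => rw [hnull.apply_succ_div_pow hf hm, ih (by omega)]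

lemma apply_eq_apply_zero (hf : LipschitzOnWith K f (Icc 0 1)) (hnull : HasNullSubcells f N)
    (hN : 1 < N) {x : ℝ} (hx : x ∈ Icc 0 1) : f x = f 0 := by
  have hN' : (1 : ℝ) < N := by exact_mod_cast hN
  refine eq_of_abs_sub_le_mul_pow (C := K) (q := 1 / N) (by positivity)
    ((div_lt_one (by positivity)).mpr hN') fun i => ?_
  have hNi : (0 : ℝ) < N ^ i := by positivity
  set m := ⌊x * N ^ i⌋₊
  have hm_le : (m : ℝ) / N ^ i ≤ x :=
    (div_le_iff₀ hNi).mpr (Nat.floor_le (by positivity [hx.1]))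
  have hx_lt : x < ((m : ℝ) + 1) / N ^ i := (lt_div_iff₀ hNi).mpr (Nat.lt_floor_add_one _)
  have hm : m ≤ N ^ i := Nat.floor_le_of_le (by push_cast; nlinarith [hx.2])
  rw [← hnull.apply_div_pow hf hm, ← Real.dist_eq]
  calc dist (f x) (f ((m : ℝ) / N ^ i)) ≤ K * dist x ((m : ℝ) / N ^ i) :=
        hf.dist_le_mul _ hx _ (natCast_div_pow_mem_Icc hm)
    _ ≤ K * (1 / N) ^ i := by
        rw [add_div] at hx_lt
        rw [Real.dist_eq, abs_of_nonneg (by linarith), one_div_pow]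
        gcongr
        linarith

end HasNullSubcells

lemma mk_div_four_pow_mem_shortcuts (l i m : ℕ) :
    ((((4 ^ (l + 1) * m + 2 * 4 ^ l : ℕ) : ℝ) / ((4 ^ (l + 1) : ℕ) : ℝ) ^ (i + 1)),
      (((4 ^ (l + 1) * m + 2 * 4 ^ l + 1 : ℕ) : ℝ) / ((4 ^ (l + 1) : ℕ) : ℝ) ^ (i + 1))) ∈
      shortcuts (l + 1) := by
  have h4 : (4 : ℝ) = 2 ^ 2 := by norm_num
  refine ⟨2 * i, m, ?_, ?_⟩ <;>
  · push_cast
    simp only [h4, one_div_pow, ← pow_mul]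
    field_simp
    ring

lemma hasNullSubcells_four_pow_succ {l : ℕ} {f : ℝ → ℝ}
    (hf : ∀ x ∈ Icc (0 : ℝ) 1, ∀ y ∈ Icc (0 : ℝ) 1, Rrel (l + 1) x y → f x = f y) :
    HasNullSubcells f (4 ^ (l + 1)) := by
  intro i m hm
  have hc : 2 * 4 ^ l < 4 ^ (l + 1) := by
    have := pow_pos (show 0 < 4 by norm_num) l
    rw [pow_succ]
    omega
  have hsub := mul_add_succ_le_pow_succ hc hm
  exact ⟨2 * 4 ^ l, hc, hf _ (natCast_div_pow_mem_Icc hsub) _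
    (natCast_div_pow_mem_Icc (Nat.le_of_succ_le hsub))
    (Or.inr (Or.inl (mk_div_four_pow_mem_shortcuts l i m)))⟩

theorem lipschitz_from_quot_to_snowflake_constant_general (s : ℝ) (hs0 : 0 < s)
    (l : ℕ) (hl : 1 ≤ l)
    (f : ℝ → ℝ) (L : ℝ)
    (hf : ∀ x ∈ Set.Icc (0 : ℝ) 1, ∀ y ∈ Set.Icc (0 : ℝ) 1,
      |f x - f y| ^ s ≤ L * quotSemiDist (fun a b => |a - b| ^ s) (Rrel l) x y) :
    ∀ x ∈ Set.Icc (0 : ℝ) 1, ∀ y ∈ Set.Icc (0 : ℝ) 1, f x = f y := by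
  have hd : ∀ a b : ℝ, 0 ≤ |a - b| ^ s := fun a b => by positivity
  have hRrefl : ∀ a, Rrel l a a := fun a => Or.inr (Or.inr rfl)
  have hlip : LipschitzOnWith (L.toNNReal ^ s⁻¹) f (Icc 0 1) := by
    refine .of_dist_rpow_le_mul hs0 fun x hx y hy => ?_
    simp only [Real.dist_eq]
    calc |f x - f y| ^ s ≤ L * quotSemiDist (fun a b => |a - b| ^ s) (Rrel l) x y := hf x hx y hy
      _ ≤ L.toNNReal * quotSemiDist (fun a b => |a - b| ^ s) (Rrel l) x y :=
        mul_le_mul_of_nonneg_right (Real.le_coe_toNNReal L) (quotSemiDist_nonneg hd x y)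
      _ ≤ L.toNNReal * |x - y| ^ s := by gcongr; exact quotSemiDist_le_self hd hRrefl x y
  have hshort : ∀ x ∈ Icc (0 : ℝ) 1, ∀ y ∈ Icc (0 : ℝ) 1, Rrel l x y → f x = f y := by
    intro x hx y hy hxy
    have hfxy := hf x hx y hy
    rw [quotSemiDist_eq_zero_of_rel hd hxy (hRrefl y) (by simp [hs0.ne']), mul_zero] at hfxy
    have : |f x - f y| ^ s = 0 := le_antisymm hfxy (by positivity)
    rwa [Real.rpow_eq_zero (abs_nonneg _) hs0.ne', abs_eq_zero, sub_eq_zero] at this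
  obtain ⟨l, rfl⟩ := Nat.exists_eq_add_of_le' hl
  have hnull := hasNullSubcells_four_pow_succ hshort
  have hN : 1 < 4 ^ (l + 1) := Nat.one_lt_pow (by omega) (by norm_num)
  intro x hx y hy
  rw [hnull.apply_eq_apply_zero hlip hN hx, hnull.apply_eq_apply_zero hlip hN hy]

/-- Let `s ∈ (0,1)` and let `d_R` be the quotient semi-distance on `(ℝ, |·|^s)` coming
from the self-similar shortcut relation with `h = 1/2^l`, where `l` satisfies the shortcut
conditions `μ = h^s ≤ min {1/4, (1-s)^s, (1/2)(2^{l-1}-1)^{s/2}}`. Then every Lipschitz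
function from `([0,1], d_R)` to `(ℝ, |·|^s)` is constant. -/
theorem lipschitz_from_quot_to_snowflake_constant (s : ℝ) (hs0 : 0 < s) (hs1 : s < 1)
    (l : ℕ) (hl : 1 ≤ l)
    (hcond1 : ((1 : ℝ) / 2 ^ l) ^ s ≤ 1 / 4)
    (hcond2 : ((1 : ℝ) / 2 ^ l) ^ s ≤ (1 - s) ^ s)
    (hcond3 : ((1 : ℝ) / 2 ^ l) ^ s ≤ (1 / 2) * ((2 : ℝ) ^ (l - 1) - 1) ^ (s / 2))
    (f : ℝ → ℝ) (L : ℝ)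
    (hf : ∀ x ∈ Set.Icc (0 : ℝ) 1, ∀ y ∈ Set.Icc (0 : ℝ) 1,
      |f x - f y| ^ s ≤ L * quotSemiDist (fun a b => |a - b| ^ s) (Rrel l) x y) :
    ∀ x ∈ Set.Icc (0 : ℝ) 1, ∀ y ∈ Set.Icc (0 : ℝ) 1, f x = f y :=
  lipschitz_from_quot_to_snowflake_constant_general s hs0 l hl f L hf
end

section
/- Let x be a Lebesgue density point of a measurable set E ⊆ ℝ^N with respect to an Ahlfors α-regular measure H^α. For all ε > 0 and m ∈ ℕ there exists r_0 > 0 such that: for all r ∈ (0, r_0), every finite family of pairwise non-overlapping congruent cubes {I_j}_{j∈J} covering B(x,r) with H^α(⋃_j I_j) ≤ (1 + ε/m)·H^α(B(x,r)) satisfies #{j ∈ J : H^α(E ∩ I_j)/H^α(I_j) < 1 - 1/m} ≤ ε·#J. -/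
open MeasureTheory Filter
open scoped ENNReal Classical

/-!
Since the cubes are translates, they share a measure `s`, and each bad cube contributes more
than `s / m` to `H^α(⋃ I_j \ E)`. At a density point `H^α(B \ E) ≤ δ H^α(B)` for small balls,
and the union exceeds the ball by at most a factor `1 + ε/m`; with `δ ≤ (ε/m)²` this gives
`H^α(⋃ I_j \ E) ≤ (ε/m) H^α(⋃ I_j) = (ε/m) #J s`, and Markov's inequality bounds the number
of bad cubes by `ε #J`.
-/

open Set Function

theorem ENNReal.eventually_mul_le_of_tendsto_div_nhds_one {β : Type*} {l : Filter β}
    {f g : β → ℝ≥0∞} (h : Tendsto (fun b => f b / g b) l (nhds 1)) {c : ℝ≥0∞} (hc0 : c ≠ 0)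
    (hc1 : c < 1) : ∀ᶠ b in l, c * g b ≤ f b ∧ g b ≠ 0 ∧ g b ≠ ∞ := by
  filter_upwards [h.eventually_const_lt hc1, h.eventually_lt_const ENNReal.one_lt_top]
    with b hc hfin
  obtain ⟨hf0, hg_top⟩ := ENNReal.div_pos_iff.1 (pos_iff_ne_zero.2 hc0 |>.trans hc)
  have hg0 : g b ≠ 0 := by
    rintro hg
    rw [hg, ENNReal.div_zero hf0] at hfin
    exact hfin.false
  exact ⟨((ENNReal.lt_div_iff_mul_lt (.inl hg0) (.inl hg_top)).1 hc).le, hg0, hg_top⟩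

section MeasureReal

variable {X : Type*} [MeasurableSpace X] {μ : Measure X} {E : Set X}

theorem toReal_ofReal_mul_measure {S : Set X} {a : ℝ} (ha : 0 ≤ a) :
    (ENNReal.ofReal a * μ S).toReal = a * μ.real S := by
  rw [ENNReal.toReal_mul, ENNReal.toReal_ofReal ha, measureReal_def]

theorem one_sub_mul_measureReal_lt_sdiff {S : Set X} (hE : MeasurableSet E) (hS : μ S ≠ ∞)
    {t : ℝ} (ht : 0 ≤ t) (h : μ (E ∩ S) < ENNReal.ofReal t * μ S) :
    (1 - t) * μ.real S < μ.real (S \ E) := by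
  have h' : μ.real (E ∩ S) < t * μ.real S := by
    rw [← toReal_ofReal_mul_measure ht]
    exact (ENNReal.toReal_lt_toReal (measure_ne_top_of_subset inter_subset_right hS)
      (ENNReal.mul_ne_top ENNReal.ofReal_ne_top hS)).2 h
  have hsplit := measureReal_inter_add_sdiff (μ := μ) (s := S) hE hS
  rw [inter_comm] at hsplit
  linarith

theorem measureReal_sdiff_le_of_subset_of_dense {B U : Set X} {η δ : ℝ} (hE : MeasurableSet E)
    (hBU : B ⊆ U) (hU_top : μ U ≠ ∞) (hη : 0 ≤ η) (hδη : δ ≤ η ^ 2) (hδ1 : δ ≤ 1)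
    (hU : μ U ≤ ENNReal.ofReal (1 + η) * μ B)
    (hdense : ENNReal.ofReal (1 - δ) * μ B ≤ μ (E ∩ B)) :
    μ.real (U \ E) ≤ η * μ.real U := by
  have hB_top : μ B ≠ ∞ := measure_ne_top_of_subset hBU hU_top
  have hU' : μ.real U ≤ (1 + η) * μ.real B := by
    rw [← toReal_ofReal_mul_measure (by positivity)]
    exact ENNReal.toReal_mono (ENNReal.mul_ne_top ENNReal.ofReal_ne_top hB_top) hU
  have hdense' : (1 - δ) * μ.real B ≤ μ.real (U ∩ E) := by
    rw [← toReal_ofReal_mul_measure (by linarith)]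
    exact ENNReal.toReal_mono (measure_ne_top_of_subset inter_subset_left hU_top)
      (hdense.trans (measure_mono fun y hy => ⟨hBU hy.2, hy.1⟩))
  have hsplit := measureReal_inter_add_sdiff (μ := μ) (s := U) hE hU_top
  -- `δ ≤ η²` is what makes `(1 - δ) / (1 + η) ≥ 1 - η`
  have : (1 + η) * μ.real (U \ E) ≤ (1 + η) * (η * μ.real U) := by
    nlinarith [mul_le_mul_of_nonneg_left hU' (sub_nonneg.2 hδ1),
      mul_le_mul_of_nonneg_left hdense' (by linarith : 0 ≤ 1 + η),
      mul_nonneg (sub_nonneg.2 hδη) (measureReal_nonneg (μ := μ) (s := U))]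
  exact le_of_mul_le_mul_left this (by linarith)

theorem card_filter_mul_le_of_measureReal_sdiff_le {ι : Type*} {J : Finset ι} {I : ι → Set X}
    (hE : MeasurableSet E) (hI : ∀ j ∈ J, MeasurableSet (I j))
    (hdisj : (J : Set ι).Pairwise (AEDisjoint μ on I)) {s : ℝ≥0∞} (hs : ∀ j ∈ J, μ (I j) = s)
    (hs0 : s ≠ 0) (hs_top : s ≠ ∞) {t η : ℝ} (ht : 0 ≤ t)
    (hsmall : μ.real ((⋃ j ∈ J, I j) \ E) ≤ η * μ.real (⋃ j ∈ J, I j)) :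
    ((J.filter fun j => μ (E ∩ I j) < ENNReal.ofReal t * μ (I j)).card : ℝ) * (1 - t) ≤
      η * J.card := by
  set bad := J.filter fun j => μ (E ∩ I j) < ENNReal.ofReal t * μ (I j)
  have hs_real : ∀ j ∈ J, μ.real (I j) = s.toReal := fun j hj => by rw [measureReal_def, hs j hj]
  have hI_top : ∀ j ∈ J, μ (I j) ≠ ∞ := fun j hj => (hs j hj).trans_ne hs_top
  have hsdiff : ∑ j ∈ J, μ.real (I j \ E) = μ.real ((⋃ j ∈ J, I j) \ E) := by
    simp_rw [iUnion_sdiff]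
    exact (measureReal_biUnion_finset₀
      (hdisj.mono' fun j j' h => h.mono sdiff_subset sdiff_subset)
      (fun j hj => ((hI j hj).diff hE).nullMeasurableSet)
      (fun j hj => measure_ne_top_of_subset sdiff_subset (hI_top j hj))).symm
  have hunion : μ.real (⋃ j ∈ J, I j) = J.card * s.toReal := by
    rw [measureReal_biUnion_finset₀ hdisj (fun j hj => (hI j hj).nullMeasurableSet) hI_top,
      Finset.sum_congr rfl hs_real, Finset.sum_const, nsmul_eq_mul]
  refine le_of_mul_le_mul_right ?_ (ENNReal.toReal_pos hs0 hs_top)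
  calc (bad.card : ℝ) * (1 - t) * s.toReal = ∑ j ∈ bad, (1 - t) * μ.real (I j) := by
        rw [Finset.sum_congr rfl fun j hj => by rw [hs_real j (Finset.mem_filter.1 hj).1],
          Finset.sum_const, nsmul_eq_mul, mul_assoc]
    _ ≤ ∑ j ∈ bad, μ.real (I j \ E) := Finset.sum_le_sum fun j hj =>
        (one_sub_mul_measureReal_lt_sdiff hE (hI_top j (Finset.mem_filter.1 hj).1) ht
          (Finset.mem_filter.1 hj).2).le
    _ ≤ ∑ j ∈ J, μ.real (I j \ E) :=
        Finset.sum_le_sum_of_subset_of_nonneg (Finset.filter_subset _ _)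
          fun _ _ _ => measureReal_nonneg
    _ ≤ η * (J.card * s.toReal) := by rw [hsdiff, ← hunion]; exact hsmall
    _ = η * J.card * s.toReal := by ring

end MeasureReal

theorem density_point_few_bad_cubes_general {N : ℕ} (α : ℝ)
    (E : Set (Fin N → ℝ)) (hE : MeasurableSet E) (x : Fin N → ℝ)
    (hx : Tendsto (fun r : ℝ => μH[α] (E ∩ Metric.ball x r) / μH[α] (Metric.ball x r))
      (nhdsWithin 0 (Set.Ioi 0)) (nhds 1)) :
    ∀ ε : ℝ, 0 < ε → ∀ m : ℕ, 1 ≤ m → ∃ r₀ : ℝ, 0 < r₀ ∧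
      ∀ r : ℝ, 0 < r → r < r₀ →
      ∀ (ι : Type) (J : Finset ι) (I : ι → Set (Fin N → ℝ)),
        (∀ j ∈ J, MeasurableSet (I j)) →
        (∀ j ∈ J, ∀ j' ∈ J, j ≠ j' → μH[α] (I j ∩ I j') = 0) →
        (∀ j ∈ J, ∀ j' ∈ J, ∃ v : Fin N → ℝ, I j' = (fun y => y + v) '' I j) →
        Metric.ball x r ⊆ ⋃ j ∈ J, I j →
        μH[α] (⋃ j ∈ J, I j) ≤ ENNReal.ofReal (1 + ε / m) * μH[α] (Metric.ball x r) →
        ((J.filter fun j =>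
            μH[α] (E ∩ I j) < ENNReal.ofReal (1 - 1 / m) * μH[α] (I j)).card : ℝ) ≤
          ε * (J.card : ℝ) := by
  intro ε hε m hm
  have hm0 : (0 : ℝ) < m := by exact_mod_cast hm
  set δ := min ((ε / m) ^ 2) (1 / 2)
  have hδ0 : 0 < δ := lt_min (by positivity) one_half_pos
  have hδ_half : δ ≤ 1 / 2 := min_le_right _ _
  obtain ⟨r₀, hr₀, hdense⟩ := mem_nhdsGT_iff_exists_Ioo_subset.1 <|
    ENNReal.eventually_mul_le_of_tendsto_div_nhds_one hx (c := ENNReal.ofReal (1 - δ))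
      (ENNReal.ofReal_pos.2 (by linarith)).ne'
      (ENNReal.ofReal_lt_one.2 (by linarith))
  refine ⟨r₀, hr₀, fun r hr hrr₀ ι J I hI hdisj htransl hcov hU => ?_⟩
  obtain ⟨hdense, hB0, hB_top⟩ := hdense ⟨hr, hrr₀⟩
  rcases J.eq_empty_or_nonempty with rfl | ⟨j₀, hj₀⟩
  · simp
  have hs : ∀ j ∈ J, μH[α] (I j) = μH[α] (I j₀) := fun j hj => by
    obtain ⟨v, hv⟩ := htransl j₀ hj₀ j hj
    rw [hv]
    exact (IsometryEquiv.addRight v).hausdorffMeasure_image α _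
  have hU_top : μH[α] (⋃ j ∈ J, I j) ≠ ∞ :=
    ne_top_of_le_ne_top (ENNReal.mul_ne_top ENNReal.ofReal_ne_top hB_top) hU
  have hs0 : μH[α] (I j₀) ≠ 0 := fun h0 => hB0 <| measure_mono_null hcov <|
    (measure_biUnion_null_iff J.countable_toSet).2 fun j hj => (hs j hj).trans h0
  have hsmall := measureReal_sdiff_le_of_subset_of_dense hE hcov hU_top (by positivity)
    (min_le_left _ _) (by linarith) hU hdense
  have hcount := card_filter_mul_le_of_measureReal_sdiff_le hE hI hdisj hs hs0
    (measure_ne_top_of_subset (subset_biUnion_of_mem hj₀) hU_top)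
    (sub_nonneg.2 (div_le_one_of_le₀ (by exact_mod_cast hm : (1 : ℝ) ≤ m) hm0.le)) hsmall
  rwa [sub_sub_cancel, mul_one_div, div_mul_eq_mul_div, div_le_div_iff_of_pos_right hm0] at hcount

/-- Let `x` be a density point of a measurable set `E ⊆ ℝ^N` with respect to an Ahlfors
`α`-regular Hausdorff measure `H^α`. For all `ε > 0` and `m ≥ 1` there is `r₀ > 0` such
that: for every `r ∈ (0, r₀)` and every finite family of pairwise non-overlapping
congruent (pairwise translate) measurable cubes covering `B(x,r)` whose union has measure
at most `(1 + ε/m)·H^α(B(x,r))`, the number of cubes `I_j` with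
`H^α(E ∩ I_j) < (1 - 1/m)·H^α(I_j)` is at most `ε·#J`. -/
theorem density_point_few_bad_cubes {N : ℕ} (α : ℝ) (hα : 0 < α)
    (C : ℝ≥0∞) (hC0 : 0 < C) (hCtop : C ≠ ⊤)
    (hreg : ∀ (z : Fin N → ℝ) (r : ℝ), 0 < r →
      C⁻¹ * ENNReal.ofReal r ^ α ≤ μH[α] (Metric.ball z r) ∧
      μH[α] (Metric.ball z r) ≤ C * ENNReal.ofReal r ^ α)
    (E : Set (Fin N → ℝ)) (hE : MeasurableSet E) (x : Fin N → ℝ)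
    (hx : Tendsto (fun r : ℝ => μH[α] (E ∩ Metric.ball x r) / μH[α] (Metric.ball x r))
      (nhdsWithin 0 (Set.Ioi 0)) (nhds 1)) :
    ∀ ε : ℝ, 0 < ε → ∀ m : ℕ, 1 ≤ m → ∃ r₀ : ℝ, 0 < r₀ ∧
      ∀ r : ℝ, 0 < r → r < r₀ →
      ∀ (ι : Type) (J : Finset ι) (I : ι → Set (Fin N → ℝ)),
        (∀ j ∈ J, MeasurableSet (I j)) →
        (∀ j ∈ J, ∀ j' ∈ J, j ≠ j' → μH[α] (I j ∩ I j') = 0) →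
        (∀ j ∈ J, ∀ j' ∈ J, ∃ v : Fin N → ℝ, I j' = (fun y => y + v) '' I j) →
        Metric.ball x r ⊆ ⋃ j ∈ J, I j →
        μH[α] (⋃ j ∈ J, I j) ≤ ENNReal.ofReal (1 + ε / m) * μH[α] (Metric.ball x r) →
        ((J.filter fun j =>
            μH[α] (E ∩ I j) < ENNReal.ofReal (1 - 1 / m) * μH[α] (I j)).card : ℝ) ≤
          ε * (J.card : ℝ) :=
  density_point_few_bad_cubes_general α E hE x hx
end
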